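/- arXiv:2207.06054 — 6 statements merged into one kernel-verified Lean document; each statement's English description precedes it below -/
import Mathlib

section
/- For every positive integer n, the following identity of rational functions in q holds: (1−qⁿ) · Σ_{k=0}^{⌊n/2⌋} (−1)^k q^{k(k−1)/2} [n−k choose k]_q / (1−q^{n−k}) = 𝒜ₙ(q). -/
open Polynomial Finset

/-- The Gaussian (q-)binomial coefficient `[n choose k]_r` (with base `r`), as a rational
function: `((1 - r^n)(1 - r^(n-1)) ⋯ (1 - r^(n-k+1))) / ((1 - r)(1 - r^2) ⋯ (1 - r^k))`
for `0 ≤ k ≤ n`, and `0` otherwise. -/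
noncomputable def qbinom (r : RatFunc ℚ) (n k : ℤ) : RatFunc ℚ :=
  if 0 ≤ k ∧ k ≤ n then
    (∏ i ∈ Finset.range k.toNat, (1 - r ^ (n - (i : ℤ)))) /
      (∏ i ∈ Finset.range k.toNat, (1 - r ^ ((i : ℤ) + 1)))
  else 0

/-- The Laurent polynomial `𝒜ₙ(q)` of Andrews–Baxter type. -/
noncomputable def qA (n : ℕ) : RatFunc ℚ :=
  let m : ℤ := (n : ℤ) / 3
  if n % 3 = 0 then
    (-1) ^ (n / 3) * (1 + RatFunc.X ^ m) * RatFunc.X ^ (m * (3 * m - 1) / 2)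
  else if n % 3 = 1 then
    (-1) ^ (n / 3) * RatFunc.X ^ (m * (3 * m + 1) / 2)
  else
    (-1) ^ (n / 3 + 1) * RatFunc.X ^ ((m + 1) * (3 * m + 2) / 2)

/-- The Laurent polynomial `ℬₙ(q)`. -/
noncomputable def qB (n : ℕ) : RatFunc ℚ :=
  let m : ℤ := (n : ℤ) / 3
  if n % 3 = 0 then
    (-1) ^ (n / 3) * (1 + RatFunc.X ^ (2 * m)) * RatFunc.X ^ (m * (3 * m - 5) / 2)
  else if n % 3 = 1 then
    (-1) ^ (n / 3) * RatFunc.X ^ (m * (3 * m + 1) / 2)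
  else
    (-1) ^ (n / 3 + 1) * RatFunc.X ^ ((m - 1) * (3 * m + 2) / 2)

/-- The q-trinomial coefficient `τ₀(n, m, q)`. -/
noncomputable def tau0 (n m : ℕ) : RatFunc ℚ :=
  ∑ k ∈ Finset.range (n + 1),
    (-1) ^ k * RatFunc.X ^ ((n : ℤ) * k - (k : ℤ) * ((k : ℤ) - 1) / 2) *
      qbinom RatFunc.X (n : ℤ) (k : ℤ) *
      qbinom RatFunc.X (2 * (n : ℤ) - 2 * (k : ℤ)) ((n : ℤ) - (m : ℤ) - (k : ℤ))

/-- The q-trinomial coefficient `T₀(n, m, q)`. -/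
noncomputable def T0 (n m : ℕ) : RatFunc ℚ :=
  ∑ k ∈ Finset.range (n + 1),
    (-1) ^ k * qbinom (RatFunc.X ^ 2) (n : ℤ) (k : ℤ) *
      qbinom RatFunc.X (2 * (n : ℤ) - 2 * (k : ℤ)) ((n : ℤ) - (m : ℤ) - (k : ℤ))

/-- The q-trinomial coefficient `T₁(n, m, q)`. -/
noncomputable def T1 (n m : ℕ) : RatFunc ℚ :=
  ∑ k ∈ Finset.range (n + 1),
    (-RatFunc.X) ^ k * qbinom (RatFunc.X ^ 2) (n : ℤ) (k : ℤ) *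
      qbinom RatFunc.X (2 * (n : ℤ) - 2 * (k : ℤ)) ((n : ℤ) - (m : ℤ) - (k : ℤ))

/-- `A ≡ B (mod P)` for rational functions `A`, `B` and a polynomial modulus `P`:
`A - B = P * C` for some rational function `C` whose denominator is coprime to `P`. -/
def rcong (A B : RatFunc ℚ) (P : Polynomial ℚ) : Prop :=
  ∃ C : RatFunc ℚ,
    A - B = algebraMap (Polynomial ℚ) (RatFunc ℚ) P * C ∧ IsCoprime C.denom P

/-- `A ≡ B (mod P)` as a polynomial congruence: `P` divides `A - B` in `ℚ[q]`,
i.e. `A - B = P * C` for some polynomial `C`. -/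
def pcong (A B : RatFunc ℚ) (P : Polynomial ℚ) : Prop :=
  ∃ C : Polynomial ℚ,
    A - B = algebraMap (Polynomial ℚ) (RatFunc ℚ) P * algebraMap (Polynomial ℚ) (RatFunc ℚ) C


noncomputable def qX : RatFunc ℚ := RatFunc.X

lemma qX_ne_zero : qX ≠ 0 := by
  simpa [qX, ← RatFunc.algebraMap_X] using
    (map_ne_zero_iff _ (IsFractionRing.injective (Polynomial ℚ) (RatFunc ℚ))).mpr
      (Polynomial.X_ne_zero)

lemma one_sub_qX_pow_ne_zero {m : ℕ} (hm : 1 ≤ m) : 1 - qX ^ m ≠ 0 := by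
  intro h
  have h2 : (qX : RatFunc ℚ) ^ m = 1 := (sub_eq_zero.mp h).symm
  have h3 : (Polynomial.X : Polynomial ℚ) ^ m = 1 := by
    apply IsFractionRing.injective (Polynomial ℚ) (RatFunc ℚ)
    simpa [qX, ← RatFunc.algebraMap_X, map_pow] using h2
  have := congrArg (Polynomial.eval (0 : ℚ)) h3
  simp [zero_pow (by omega : m ≠ 0)] at this

noncomputable def Bq (n k : ℕ) : RatFunc ℚ :=
  (∏ i ∈ Finset.range k, (1 - qX ^ (n - i))) / (∏ i ∈ Finset.range k, (1 - qX ^ (i + 1)))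

lemma Bq_den_ne_zero (k : ℕ) : (∏ i ∈ Finset.range k, (1 - qX ^ (i + 1))) ≠ 0 :=
  Finset.prod_ne_zero_iff.mpr fun i _ => one_sub_qX_pow_ne_zero (by omega)

lemma Bq_zero_right (n : ℕ) : Bq n 0 = 1 := by simp [Bq]

lemma Bq_self (k : ℕ) : Bq k k = 1 := by
  have h : (∏ i ∈ Finset.range k, (1 - qX ^ (k - i))) =
      ∏ i ∈ Finset.range k, (1 - qX ^ (i + 1)) := by
    rw [← Finset.prod_range_reflect (fun j => 1 - qX ^ (j + 1)) k]
    exact Finset.prod_congr rfl fun i hi => by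
      rw [Finset.mem_range] at hi
      show _ = 1 - qX ^ (k - 1 - i + 1)
      congr 2
      omega
  rw [Bq, h, div_self (Bq_den_ne_zero k)]

lemma Bq_eq_zero {n k : ℕ} (h1 : 1 ≤ k) (h2 : n < k) : Bq n k = 0 := by
  rw [Bq, _root_.div_eq_zero_iff]
  left
  apply Finset.prod_eq_zero (Finset.mem_range.mpr h2)
  simp [Nat.sub_self]

lemma Bq_R1 (a b : ℕ) (h : b ≤ a) :
    (1 - qX ^ (b + 1)) * Bq (a + 1) (b + 1) = (1 - qX ^ (a + 1)) * Bq a b := by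
  have hnum : (∏ i ∈ Finset.range (b + 1), (1 - qX ^ (a + 1 - i))) =
      (∏ i ∈ Finset.range b, (1 - qX ^ (a - i))) * (1 - qX ^ (a + 1)) := by
    rw [Finset.prod_range_succ']
    congr 1
    exact Finset.prod_congr rfl fun i hi => by
      rw [Finset.mem_range] at hi; congr 2; omega
  have hden : (∏ i ∈ Finset.range (b + 1), (1 - qX ^ (i + 1))) =
      (∏ i ∈ Finset.range b, (1 - qX ^ (i + 1))) * (1 - qX ^ (b + 1)) :=
    Finset.prod_range_succ _ _
  rw [Bq, Bq, hnum, hden]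
  have hd1 := Bq_den_ne_zero b
  have hd2 := one_sub_qX_pow_ne_zero (m := b + 1) (by omega)
  field_simp

lemma Bq_R2 (a b : ℕ) (h : b ≤ a) :
    (1 - qX ^ (a + 1 - b)) * Bq (a + 1) b = (1 - qX ^ (a + 1)) * Bq a b := by
  have key : (∏ i ∈ Finset.range b, (1 - qX ^ (a + 1 - i))) * (1 - qX ^ (a + 1 - b)) =
      (∏ i ∈ Finset.range b, (1 - qX ^ (a - i))) * (1 - qX ^ (a + 1)) := by
    have h1 := Finset.prod_range_succ (fun i => 1 - qX ^ (a + 1 - i)) b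
    have h2 := Finset.prod_range_succ' (fun i => 1 - qX ^ (a + 1 - i)) b
    rw [h2] at h1
    rw [← h1]
    congr 1
    exact Finset.prod_congr rfl fun i hi => by
      rw [Finset.mem_range] at hi; congr 2; omega
  rw [Bq, Bq, mul_div_assoc', mul_div_assoc']
  congr 1
  linear_combination key

lemma Bq_P2 (a b : ℕ) (h : b ≤ a) :
    Bq (a + 1) (b + 1) = qX ^ (b + 1) * Bq a (b + 1) + Bq a b := by
  rcases eq_or_lt_of_le h with rfl | hlt
  · rw [Bq_self, Bq_self, Bq_eq_zero (by omega) (by omega)]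
    ring
  · have hb1 : b + 1 ≤ a := hlt
    have h1 := Bq_R1 a b h
    have h2 := Bq_R2 a (b + 1) hb1
    have heq : a + 1 - (b + 1) = a - b := by omega
    rw [heq] at h2
    have ha : (1 - qX ^ (a + 1)) ≠ 0 := one_sub_qX_pow_ne_zero (by omega)
    have hsum : qX ^ (a - b) * qX ^ (b + 1) = qX ^ (a + 1) := by
      rw [← pow_add]; congr 1; omega
    apply mul_left_cancel₀ ha
    linear_combination qX ^ (b + 1) * h2 + h1 + Bq (a + 1) (b + 1) * hsum

lemma Bq_P1 (a b : ℕ) (h : b ≤ a) :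
    Bq (a + 1) (b + 1) - Bq a (b + 1) = qX ^ (a - b) * Bq a b := by
  rcases eq_or_lt_of_le h with rfl | hlt
  · rw [Bq_self, Bq_self, Bq_eq_zero (by omega) (by omega), Nat.sub_self]
    ring
  · have hb1 : b + 1 ≤ a := hlt
    have h1 := Bq_R1 a b h
    have h2 := Bq_R2 a (b + 1) hb1
    have heq : a + 1 - (b + 1) = a - b := by omega
    rw [heq] at h2
    have ha : (1 - qX ^ (a + 1)) ≠ 0 := one_sub_qX_pow_ne_zero (by omega)
    have hsum : qX ^ (a - b) * qX ^ (b + 1) = qX ^ (a + 1) := by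
      rw [← pow_add]; congr 1; omega
    apply mul_left_cancel₀ ha
    linear_combination h2 + qX ^ (a - b) * h1 + Bq (a + 1) (b + 1) * hsum

noncomputable def cq : ℕ → RatFunc ℚ
  | 0 => 1
  | k + 1 => -qX ^ k * cq k

noncomputable def Eq' (n : ℕ) : RatFunc ℚ := ∑ k ∈ Finset.range (n + 2), cq k * Bq (n - k) k

lemma Esum_ext (n : ℕ) {M M' : ℕ} (hMM : M ≤ M') (hM : n + 1 ≤ 2 * M) :
    ∑ k ∈ Finset.range M', cq k * Bq (n - k) k = ∑ k ∈ Finset.range M, cq k * Bq (n - k) k := by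
  symm
  apply Finset.sum_subset (Finset.range_subset_range.mpr hMM)
  intro k hk hk2
  rw [Finset.mem_range] at hk hk2
  push_neg at hk2
  rw [Bq_eq_zero (by omega) (by omega), mul_zero]

lemma Eq'_eq (n M : ℕ) (hM : n + 1 ≤ 2 * M) :
    ∑ k ∈ Finset.range M, cq k * Bq (n - k) k = Eq' n := by
  rcases le_total M (n + 2) with h | h
  · rw [Eq', Esum_ext n h hM]
  · rw [Eq', Esum_ext n h (by omega)]

lemma cq_succ (k : ℕ) : cq (k + 1) = -qX ^ k * cq k := rfl

lemma Eq'_rec (n : ℕ) : Eq' (n + 3) = -qX ^ (n + 1) * Eq' n := by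
  have hsplit : ∀ k ∈ Finset.range (n + 5),
      cq k * Bq (n + 3 - k) k =
        cq k * qX ^ k * Bq (n + 2 - k) k +
          (if k = 0 then 0 else cq k * Bq (n + 2 - k) (k - 1)) := by
    intro k _
    match k with
    | 0 => simp [cq, Bq_zero_right]
    | j + 1 =>
      rw [if_neg (by omega)]
      rcases le_or_gt (2 * j) (n + 1) with hj | hj
      · have e1 : n + 3 - (j + 1) = (n + 1 - j) + 1 := by omega
        have e2 : n + 2 - (j + 1) = n + 1 - j := by omega
        rw [e1, e2, Bq_P2 (n + 1 - j) j (by omega), Nat.add_sub_cancel]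
        ring
      · rw [Bq_eq_zero (n := n + 3 - (j + 1)) (by omega) (by omega),
          Bq_eq_zero (n := n + 2 - (j + 1)) (k := j + 1) (by omega) (by omega),
          Bq_eq_zero (n := n + 2 - (j + 1)) (k := j + 1 - 1) (by omega) (by omega)]
        simp
  have h1 : Eq' (n + 3) =
      (∑ k ∈ Finset.range (n + 5), cq k * qX ^ k * Bq (n + 2 - k) k) +
        ∑ k ∈ Finset.range (n + 5), (if k = 0 then 0 else cq k * Bq (n + 2 - k) (k - 1)) := by
    rw [Eq', Finset.sum_congr rfl hsplit, Finset.sum_add_distrib]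
  have h3 : (∑ k ∈ Finset.range (n + 5), cq k * qX ^ k * Bq (n + 2 - k) k) =
      ∑ k ∈ Finset.range (n + 4), cq k * qX ^ k * Bq (n + 2 - k) k := by
    rw [Finset.sum_range_succ, Bq_eq_zero (n := n + 2 - (n + 4)) (by omega) (by omega)]
    simp
  have h4 : (∑ k ∈ Finset.range (n + 5), (if k = 0 then 0 else cq k * Bq (n + 2 - k) (k - 1))) =
      ∑ j ∈ Finset.range (n + 4), cq (j + 1) * Bq (n + 1 - j) j := by
    rw [Finset.sum_range_succ']
    have hzero : (if (0:ℕ) = 0 then (0 : RatFunc ℚ)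
        else cq 0 * Bq (n + 2 - 0) (0 - 1)) = 0 := by simp
    rw [hzero, add_zero]
    refine Finset.sum_congr rfl fun j _ => ?_
    rw [if_neg (by omega), Nat.add_sub_cancel]
    congr 2
    omega
  have h5 : ∀ k ∈ Finset.range (n + 4),
      cq k * qX ^ k * Bq (n + 2 - k) k + cq (k + 1) * Bq (n + 1 - k) k =
        (if k = 0 then 0 else -qX ^ (n + 1) * (cq (k - 1) * Bq (n - (k - 1)) (k - 1))) := by
    intro k _
    match k with
    | 0 => simp [cq, Bq_zero_right]
    | j + 1 =>
      rw [if_neg (by omega), Nat.add_sub_cancel]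
      rcases le_or_gt (2 * j) n with hj | hj
      · have e1 : n + 2 - (j + 1) = (n - j) + 1 := by omega
        have e2 : n + 1 - (j + 1) = n - j := by omega
        rw [e1, e2, cq_succ (j + 1)]
        have hP := Bq_P1 (n - j) j (by omega)
        have e3 : n - j - j = n - 2 * j := by omega
        rw [e3] at hP
        have hpow : qX ^ (j + 1) * qX ^ j * qX ^ (n - 2 * j) = qX ^ (n + 1) := by
          rw [← pow_add, ← pow_add]; congr 1; omega
        calc cq (j + 1) * qX ^ (j + 1) * Bq (n - j + 1) (j + 1) +
              -qX ^ (j + 1) * cq (j + 1) * Bq (n - j) (j + 1)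
            = cq (j + 1) * qX ^ (j + 1) *
                (Bq (n - j + 1) (j + 1) - Bq (n - j) (j + 1)) := by ring
          _ = cq (j + 1) * qX ^ (j + 1) * (qX ^ (n - 2 * j) * Bq (n - j) j) := by rw [hP]
          _ = -qX ^ (n + 1) * (cq j * Bq (n - j) j) := by
              rw [cq_succ j]
              linear_combination (-(cq j * Bq (n - j) j)) * hpow
      · rw [Bq_eq_zero (n := n + 2 - (j + 1)) (by omega) (by omega),
          Bq_eq_zero (n := n + 1 - (j + 1)) (by omega) (by omega),
          Bq_eq_zero (n := n - j) (k := j) (by omega) (by omega)]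
        simp
  have h6 : (∑ k ∈ Finset.range (n + 4),
        (if k = 0 then 0 else -qX ^ (n + 1) * (cq (k - 1) * Bq (n - (k - 1)) (k - 1)))) =
      -qX ^ (n + 1) * ∑ j ∈ Finset.range (n + 3), cq j * Bq (n - j) j := by
    rw [Finset.sum_range_succ']
    have hzero : (if (0:ℕ) = 0 then (0 : RatFunc ℚ)
        else -qX ^ (n + 1) * (cq (0 - 1) * Bq (n - (0 - 1)) (0 - 1))) = 0 := by simp
    rw [hzero, add_zero, Finset.mul_sum]
    refine Finset.sum_congr rfl fun j _ => ?_
    simp only [Nat.add_sub_cancel]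
    rw [if_neg (by omega)]
  rw [h1, h3, h4, ← Finset.sum_add_distrib, Finset.sum_congr rfl h5, h6,
    Eq'_eq n (n + 3) (by omega)]

lemma Eq'_zero : Eq' 0 = 1 := by
  rw [Eq', Finset.sum_range_succ, Finset.sum_range_succ, Finset.sum_range_zero,
    Bq_eq_zero (n := 0 - 1) (k := 1) (by omega) (by omega)]
  simp [cq, Bq_zero_right]

lemma Eq'_one : Eq' 1 = 1 := by
  rw [Eq', Finset.sum_range_succ, Finset.sum_range_succ, Finset.sum_range_succ,
    Finset.sum_range_zero,
    Bq_eq_zero (n := 1 - 1) (k := 1) (by omega) (by omega),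
    Bq_eq_zero (n := 1 - 2) (k := 2) (by omega) (by omega)]
  simp [cq, Bq_zero_right]

lemma Eq'_two : Eq' 2 = 0 := by
  rw [Eq', Finset.sum_range_succ, Finset.sum_range_succ, Finset.sum_range_succ,
    Finset.sum_range_succ, Finset.sum_range_zero,
    Bq_eq_zero (n := 2 - 2) (k := 2) (by omega) (by omega),
    Bq_eq_zero (n := 2 - 3) (k := 3) (by omega) (by omega),
    (show Bq (2 - 1) 1 = 1 from Bq_self 1)]
  simp [cq, Bq_zero_right]

lemma qX_zpow_natCast (m : ℕ) : qX ^ (m : ℤ) = qX ^ m := zpow_natCast _ _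

lemma qX_zpow_add (s t : ℤ) : qX ^ (s + t) = qX ^ s * qX ^ t := zpow_add₀ qX_ne_zero s t

lemma sq_emod_two (m : ℤ) : m * m % 2 = m % 2 := by
  conv_lhs => rw [Int.mul_emod]
  rcases Int.emod_two_eq_zero_or_one m with h | h <;> simp [h]

lemma Eq'_closed (m : ℕ) :
    Eq' (3 * m) = (-1) ^ m * qX ^ ((m : ℤ) * (3 * m - 1) / 2) ∧
    Eq' (3 * m + 1) = (-1) ^ m * qX ^ ((m : ℤ) * (3 * m + 1) / 2) ∧
    Eq' (3 * m + 2) = 0 := by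
  induction m with
  | zero => norm_num [Eq'_zero, Eq'_one, Eq'_two]
  | succ m ih =>
    obtain ⟨ih0, ih1, ih2⟩ := ih
    have hu : ((m : ℤ) * m) % 2 = (m : ℤ) % 2 := sq_emod_two _
    refine ⟨?_, ?_, ?_⟩
    · rw [show 3 * (m + 1) = 3 * m + 3 from by ring, Eq'_rec (3 * m), ih0]
      have hpow : (qX : RatFunc ℚ) ^ (3 * m + 1) = qX ^ (3 * (m : ℤ) + 1) := by
        rw [← qX_zpow_natCast]; congr 1
      have hexp : ((m : ℤ) + 1) * (3 * ((m : ℤ) + 1) - 1) / 2 =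
          (3 * (m : ℤ) + 1) + (m : ℤ) * (3 * (m : ℤ) - 1) / 2 := by
        have e1 : ((m : ℤ) + 1) * (3 * ((m : ℤ) + 1) - 1) = 3 * ((m:ℤ)*m) + 5 * m + 2 := by ring
        have e2 : (m : ℤ) * (3 * (m : ℤ) - 1) = 3 * ((m:ℤ)*m) - m := by ring
        rw [e1, e2]; omega
      push_cast
      rw [hpow, hexp, zpow_add₀ qX_ne_zero (3 * (m : ℤ) + 1) ((m : ℤ) * (3 * (m : ℤ) - 1) / 2)]
      ring
    · rw [show 3 * (m + 1) + 1 = 3 * m + 1 + 3 from by ring, Eq'_rec (3 * m + 1), ih1]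
      have hpow : (qX : RatFunc ℚ) ^ (3 * m + 1 + 1) = qX ^ (3 * (m : ℤ) + 2) := by
        rw [← qX_zpow_natCast]; congr 1
      have hexp : ((m : ℤ) + 1) * (3 * ((m : ℤ) + 1) + 1) / 2 =
          (3 * (m : ℤ) + 2) + (m : ℤ) * (3 * (m : ℤ) + 1) / 2 := by
        have e1 : ((m : ℤ) + 1) * (3 * ((m : ℤ) + 1) + 1) = 3 * ((m:ℤ)*m) + 7 * m + 4 := by ring
        have e2 : (m : ℤ) * (3 * (m : ℤ) + 1) = 3 * ((m:ℤ)*m) + m := by ring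
        rw [e1, e2]; omega
      push_cast
      rw [hpow, hexp, zpow_add₀ qX_ne_zero (3 * (m : ℤ) + 2) ((m : ℤ) * (3 * (m : ℤ) + 1) / 2)]
      ring
    · rw [show 3 * (m + 1) + 2 = 3 * m + 2 + 3 from by ring, Eq'_rec (3 * m + 2), ih2]
      ring

lemma main_red (n : ℕ) (hn : 2 ≤ n) :
    (1 - qX ^ n) * ∑ k ∈ Finset.range (n / 2 + 1), cq k * Bq (n - k) k / (1 - qX ^ (n - k)) =
      Eq' n - qX ^ (n - 1) * Eq' (n - 2) := by
  have hterm : ∀ k ∈ Finset.range (n / 2 + 1),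
      (1 - qX ^ n) * (cq k * Bq (n - k) k / (1 - qX ^ (n - k))) =
        cq k * Bq (n - k) k +
          (if k = 0 then 0 else cq k * (qX ^ (n - k) * Bq (n - k - 1) (k - 1))) := by
    intro k hk
    rw [Finset.mem_range] at hk
    have h2k : 2 * k ≤ n := by omega
    match k with
    | 0 =>
      have hne := one_sub_qX_pow_ne_zero (m := n) (by omega)
      simp only [Nat.sub_zero, if_pos rfl, ↓reduceIte, add_zero]
      rw [cq, Bq_zero_right]
      field_simp
    | j + 1 =>
      rw [if_neg (by omega)]
      have hm1 : n - (j + 1) - 1 + 1 = n - (j + 1) := by omega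
      have hR1 := Bq_R1 (n - (j + 1) - 1) j (by omega)
      rw [hm1] at hR1
      have hmne : (1 - qX ^ (n - (j + 1))) ≠ 0 := one_sub_qX_pow_ne_zero (by omega)
      have hpow2 : qX ^ (n - (j + 1)) * qX ^ (j + 1) = qX ^ n := by
        rw [← pow_add]; congr 1; omega
      rw [← mul_div_assoc, div_eq_iff hmne, Nat.add_sub_cancel]
      have hm1' : n - (j + 1) - 1 + 1 = n - (j + 1) := hm1
      linear_combination (cq (j + 1) * qX ^ (n - (j + 1))) * hR1 +
        (cq (j + 1) * Bq (n - (j + 1)) (j + 1)) * hpow2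
  rw [Finset.mul_sum, Finset.sum_congr rfl hterm, Finset.sum_add_distrib,
    Eq'_eq n (n / 2 + 1) (by omega)]
  have h2 : (∑ k ∈ Finset.range (n / 2 + 1),
      (if k = 0 then 0 else cq k * (qX ^ (n - k) * Bq (n - k - 1) (k - 1)))) =
      -(qX ^ (n - 1) * Eq' (n - 2)) := by
    rw [Finset.sum_range_succ']
    have hzero : (if (0:ℕ) = 0 then (0 : RatFunc ℚ)
        else cq 0 * (qX ^ (n - 0) * Bq (n - 0 - 1) (0 - 1))) = 0 := by simp
    rw [hzero, add_zero, ← Eq'_eq (n - 2) (n / 2) (by omega), ← neg_mul, Finset.mul_sum]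
    refine Finset.sum_congr rfl fun j hj => ?_
    rw [Finset.mem_range] at hj
    rw [if_neg (by omega), Nat.add_sub_cancel, cq_succ]
    have e1 : n - (j + 1) - 1 = n - 2 - j := by omega
    have hpow : qX ^ j * qX ^ (n - (j + 1)) = qX ^ (n - 1) := by
      rw [← pow_add]; congr 1; omega
    rw [e1]
    linear_combination (-(cq j * Bq (n - 2 - j) j)) * hpow
  rw [h2]
  ring

lemma X_eq : (RatFunc.X : RatFunc ℚ) = qX := rfl

lemma cq_eq (k : ℕ) : cq k = (-1) ^ k * qX ^ ((k : ℤ) * ((k : ℤ) - 1) / 2) := by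
  induction k with
  | zero => norm_num [cq]
  | succ k ih =>
    have hu : ((k : ℤ) * k) % 2 = (k : ℤ) % 2 := sq_emod_two _
    have hexp : ((k : ℤ) + 1) * (((k : ℤ) + 1) - 1) / 2 =
        (k : ℤ) + (k : ℤ) * ((k : ℤ) - 1) / 2 := by
      have e1 : ((k : ℤ) + 1) * (((k : ℤ) + 1) - 1) = ((k:ℤ)*k) + k := by ring
      have e2 : (k : ℤ) * ((k : ℤ) - 1) = ((k:ℤ)*k) - k := by ring
      rw [e1, e2]; omega
    rw [cq_succ, ih]
    push_cast
    rw [hexp, zpow_add₀ qX_ne_zero (k : ℤ) ((k : ℤ) * ((k : ℤ) - 1) / 2), ← qX_zpow_natCast]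
    ring

lemma qbinom_eq (a b : ℕ) (h : b ≤ a) : qbinom qX (a : ℤ) (b : ℤ) = Bq a b := by
  rw [qbinom, if_pos ⟨Int.natCast_nonneg b, by exact_mod_cast h⟩, Bq]
  simp only [Int.toNat_natCast]
  congr 1
  refine Finset.prod_congr rfl fun i hi => ?_
  rw [Finset.mem_range] at hi
  have h2 : (a : ℤ) - (i : ℤ) = ((a - i : ℕ) : ℤ) := by omega
  rw [h2, qX_zpow_natCast]

lemma final_eq (n : ℕ) (hn : 2 ≤ n) : Eq' n - qX ^ (n - 1) * Eq' (n - 2) = qA n := by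
  obtain ⟨m, r, hr, rfl⟩ : ∃ m r, r < 3 ∧ n = 3 * m + r :=
    ⟨n / 3, n % 3, Nat.mod_lt _ (by norm_num), (Nat.div_add_mod n 3).symm⟩
  interval_cases r
  · -- n = 3m, m ≥ 1
    obtain ⟨p, rfl⟩ : ∃ p, m = p + 1 := ⟨m - 1, by omega⟩
    have hu : ((p : ℤ) * p) % 2 = (p : ℤ) % 2 := sq_emod_two _
    have e4 : 3 * (p + 1) + 0 = 3 * (p + 1) := by omega
    rw [e4]
    have e2 : 3 * (p + 1) - 2 = 3 * p + 1 := by omega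
    have e3 : 3 * (p + 1) - 1 = 3 * p + 2 := by omega
    rw [e2, e3, (Eq'_closed (p + 1)).1, (Eq'_closed p).2.1]
    have h0 : (3 * (p + 1)) % 3 = 0 := by omega
    have hdiv : (3 * (p + 1)) / 3 = p + 1 := by omega
    have hdivZ : ((3 * (p + 1) : ℕ) : ℤ) / 3 = (p : ℤ) + 1 := by omega
    rw [qA]
    simp only [X_eq, hdivZ]
    rw [if_pos h0, hdiv]
    push_cast
    have hpow : (qX : RatFunc ℚ) ^ (3 * p + 2) = qX ^ (3 * (p : ℤ) + 2) := by
      rw [← qX_zpow_natCast]; congr 1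
    rw [hpow]
    have hexp : ((p : ℤ) + 1) + ((p : ℤ) + 1) * (3 * ((p : ℤ) + 1) - 1) / 2 =
        (3 * (p : ℤ) + 2) + (p : ℤ) * (3 * (p : ℤ) + 1) / 2 := by
      have a1 : ((p : ℤ) + 1) * (3 * ((p : ℤ) + 1) - 1) = 3 * ((p:ℤ)*p) + 5 * p + 2 := by ring
      have a2 : (p : ℤ) * (3 * (p : ℤ) + 1) = 3 * ((p:ℤ)*p) + p := by ring
      rw [a1, a2]; omega
    have hcomb : qX ^ (3 * (p : ℤ) + 2) * qX ^ ((p : ℤ) * (3 * (p : ℤ) + 1) / 2) =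
        qX ^ ((p : ℤ) + 1) * qX ^ (((p : ℤ) + 1) * (3 * ((p : ℤ) + 1) - 1) / 2) := by
      rw [← zpow_add₀ qX_ne_zero, ← zpow_add₀ qX_ne_zero, hexp]
    linear_combination (-(-1 : RatFunc ℚ) ^ p) * hcomb
  · -- n = 3m + 1, m ≥ 1
    obtain ⟨p, rfl⟩ : ∃ p, m = p + 1 := ⟨m - 1, by omega⟩
    have e2 : 3 * (p + 1) + 1 - 2 = 3 * p + 2 := by omega
    rw [e2, (Eq'_closed (p + 1)).2.1, (Eq'_closed p).2.2]
    have h1 : (3 * (p + 1) + 1) % 3 = 1 := by omega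
    have hdiv : (3 * (p + 1) + 1) / 3 = p + 1 := by omega
    have hdivZ : ((3 * (p + 1) + 1 : ℕ) : ℤ) / 3 = (p : ℤ) + 1 := by omega
    rw [qA]
    simp only [X_eq, hdivZ]
    rw [if_neg (by omega : ¬ (3 * (p + 1) + 1) % 3 = 0), if_pos h1, hdiv]
    push_cast
    ring
  · -- n = 3m + 2
    have e2 : 3 * m + 2 - 2 = 3 * m := by omega
    have e3 : 3 * m + 2 - 1 = 3 * m + 1 := by omega
    have hu : ((m : ℤ) * m) % 2 = (m : ℤ) % 2 := sq_emod_two _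
    rw [e2, e3, (Eq'_closed m).2.2, (Eq'_closed m).1]
    have h2 : (3 * m + 2) % 3 = 2 := by omega
    have hdiv : (3 * m + 2) / 3 = m := by omega
    have hdivZ : ((3 * m + 2 : ℕ) : ℤ) / 3 = (m : ℤ) := by omega
    rw [qA]
    simp only [X_eq, hdivZ]
    rw [if_neg (by omega : ¬ (3 * m + 2) % 3 = 0),
      if_neg (by omega : ¬ (3 * m + 2) % 3 = 1), hdiv]
    have hpow : (qX : RatFunc ℚ) ^ (3 * m + 1) = qX ^ (3 * (m : ℤ) + 1) := by
      rw [← qX_zpow_natCast]; congr 1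
    rw [hpow]
    have hexp : ((m : ℤ) + 1) * (3 * (m : ℤ) + 2) / 2 =
        (3 * (m : ℤ) + 1) + (m : ℤ) * (3 * (m : ℤ) - 1) / 2 := by
      have a1 : ((m : ℤ) + 1) * (3 * (m : ℤ) + 2) = 3 * ((m:ℤ)*m) + 5 * m + 2 := by ring
      have a2 : (m : ℤ) * (3 * (m : ℤ) - 1) = 3 * ((m:ℤ)*m) - m := by ring
      rw [a1, a2]; omega
    have hcomb : qX ^ (((m : ℤ) + 1) * (3 * (m : ℤ) + 2) / 2) =
        qX ^ (3 * (m : ℤ) + 1) * qX ^ ((m : ℤ) * (3 * (m : ℤ) - 1) / 2) := by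
      rw [hexp, zpow_add₀ qX_ne_zero]
    rw [hcomb]
    ring

theorem sum_qA_identity (n : ℕ) (hn : 0 < n) :
    (1 - RatFunc.X ^ n) *
        ∑ k ∈ Finset.range (n / 2 + 1),
          (-1) ^ k * RatFunc.X ^ ((k : ℤ) * ((k : ℤ) - 1) / 2) *
            qbinom RatFunc.X ((n : ℤ) - (k : ℤ)) (k : ℤ) / (1 - RatFunc.X ^ (n - k)) =
      qA n := by
  simp only [X_eq]
  have hconv : ∀ k ∈ Finset.range (n / 2 + 1),
      (-1) ^ k * qX ^ ((k : ℤ) * ((k : ℤ) - 1) / 2) *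
          qbinom qX ((n : ℤ) - (k : ℤ)) (k : ℤ) / (1 - qX ^ (n - k)) =
        cq k * Bq (n - k) k / (1 - qX ^ (n - k)) := by
    intro k hk
    rw [Finset.mem_range] at hk
    have hkn : k ≤ n - k := by omega
    have hcast : (n : ℤ) - (k : ℤ) = ((n - k : ℕ) : ℤ) := by omega
    rw [hcast, qbinom_eq (n - k) k hkn, ← cq_eq]
  rw [Finset.sum_congr rfl hconv]
  rcases eq_or_lt_of_le (show 1 ≤ n from hn) with h1 | h2
  · -- n = 1
    have hn1 : n = 1 := h1.symm
    subst hn1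
    rw [Finset.sum_range_one]
    rw [cq, Bq_zero_right]
    rw [qA]
    norm_num
    exact mul_inv_cancel₀ (show (1 : RatFunc ℚ) - qX ≠ 0 from by
      simpa using one_sub_qX_pow_ne_zero (le_refl 1))
  · have hn2 : 2 ≤ n := h2
    rw [main_red n hn2, final_eq n hn2]
end

section
/- For all positive integers m and n, the polynomial congruence [2m choose 2]_{q^{2n²}} ≡ (2m−1) · ( m − 2nm(m−1)(1−q^{2n}) ) (mod Φ_{2n}(q)²) holds, where [2m choose 2]_{q^{2n²}} denotes the Gaussian binomial coefficient [2m choose 2] evaluated at q^{2n²}. -/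
open Polynomial Finset

lemma key_dvd {R : Type*} [CommRing R] (t : R) (k : ℕ) :
    (t - 1) ^ 2 ∣ t ^ k - 1 - (k : R) * (t - 1) := by
  induction k with
  | zero => simp
  | succ k ih =>
    obtain ⟨c, hc⟩ := ih
    exact ⟨t * c + (k : R), by push_cast; linear_combination t * hc⟩


/-- for positive integers `m`, `n`,
`[2m choose 2]_{q^{2n²}} ≡ (2m−1)(m − 2nm(m−1)(1−q^{2n}))  (mod Φ_{2n}(q)²)`. -/
theorem qbinom_two_pow_congr (m n : ℕ) (hm : 0 < m) (hn : 0 < n) :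
    pcong (qbinom (RatFunc.X ^ (2 * n ^ 2)) (2 * (m : ℤ)) 2)
      ((2 * (m : RatFunc ℚ) - 1) *
        ((m : RatFunc ℚ) - 2 * (n : RatFunc ℚ) * (m : RatFunc ℚ) * ((m : RatFunc ℚ) - 1) *
          (1 - RatFunc.X ^ (2 * n))))
      (Polynomial.cyclotomic (2 * n) ℚ ^ 2) := by
  have hm1 : 1 ≤ m := hm
  set φ := algebraMap (Polynomial ℚ) (RatFunc ℚ) with hφ
  set t : Polynomial ℚ := X ^ (2 * n) with ht
  set P : Polynomial ℚ := ∑ i ∈ range m, ∑ j ∈ range (2 * m - 1), t ^ (2 * n * i + n * j)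
    with hP
  set Bp : Polynomial ℚ := (2 * (m : Polynomial ℚ) - 1) *
      ((m : Polynomial ℚ) - 2 * (n : Polynomial ℚ) * (m : Polynomial ℚ) *
        ((m : Polynomial ℚ) - 1) * (1 - X ^ (2 * n))) with hBp
  -- polynomial identity underlying the q-binomial coefficient
  have hpoly : (1 - ((X : Polynomial ℚ) ^ (2 * n ^ 2)) ^ (2 * m)) *
      (1 - ((X : Polynomial ℚ) ^ (2 * n ^ 2)) ^ (2 * m - 1)) =
      P * ((1 - (X : Polynomial ℚ) ^ (2 * n ^ 2)) *
        (1 - ((X : Polynomial ℚ) ^ (2 * n ^ 2)) ^ 2)) := by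
    set Y : Polynomial ℚ := (X : Polynomial ℚ) ^ (2 * n ^ 2) with hY
    have hPalt : P = (∑ i ∈ range m, (Y ^ 2) ^ i) * (∑ j ∈ range (2 * m - 1), Y ^ j) := by
      rw [hP, Finset.sum_mul_sum]
      refine Finset.sum_congr rfl fun i _ => Finset.sum_congr rfl fun j _ => ?_
      rw [ht, hY]
      simp only [← pow_mul, ← pow_add]
      congr 1
      ring
    have h1 : (∑ i ∈ range m, (Y ^ 2) ^ i) * (Y ^ 2 - 1) = Y ^ (2 * m) - 1 := by
      rw [geom_sum_mul, ← pow_mul, mul_comm 2 m, pow_mul]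
    have h2 : (∑ j ∈ range (2 * m - 1), Y ^ j) * (Y - 1) = Y ^ (2 * m - 1) - 1 :=
      geom_sum_mul Y (2 * m - 1)
    rw [hPalt]
    calc (1 - Y ^ (2 * m)) * (1 - Y ^ (2 * m - 1))
        = ((∑ i ∈ range m, (Y ^ 2) ^ i) * (Y ^ 2 - 1)) *
            ((∑ j ∈ range (2 * m - 1), Y ^ j) * (Y - 1)) := by rw [h1, h2]; ring
      _ = _ := by ring
  -- Step A : the q-binomial coefficient equals φ P
  have hA : qbinom (RatFunc.X ^ (2 * n ^ 2)) (2 * (m : ℤ)) 2 = φ P := by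
    rw [qbinom, if_pos ⟨by norm_num, by omega⟩]
    simp only [show Int.toNat 2 = 2 from rfl, Finset.prod_range_succ, Finset.prod_range_zero,
      Nat.cast_zero, Nat.cast_one, one_mul, sub_zero]
    rw [show (2 * (m : ℤ)) = ((2 * m : ℕ) : ℤ) by push_cast; ring]
    rw [show (((2 * m : ℕ) : ℤ) - 1) = ((2 * m - 1 : ℕ) : ℤ) by omega,
      show ((0 : ℤ) + 1) = ((1 : ℕ) : ℤ) by norm_num,
      show ((1 : ℤ) + 1) = ((2 : ℕ) : ℤ) by norm_num]
    simp only [zpow_natCast]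
    have hXeq : (RatFunc.X : RatFunc ℚ) = φ X := RatFunc.algebraMap_X.symm
    have hne : ∀ k : ℕ, 0 < k → (1 - (RatFunc.X : RatFunc ℚ) ^ k) ≠ 0 := by
      intro k hk h
      rw [hXeq, ← map_pow, ← map_one φ, ← map_sub] at h
      have h0 : (1 - (X : Polynomial ℚ) ^ k) = 0 :=
        IsFractionRing.injective (Polynomial ℚ) (RatFunc ℚ) (h.trans (map_zero φ).symm)
      have := congrArg (Polynomial.eval 0) h0
      simp [zero_pow hk.ne'] at this
    have hden : ((1 - ((RatFunc.X : RatFunc ℚ) ^ (2 * n ^ 2)) ^ 1) *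
        (1 - ((RatFunc.X : RatFunc ℚ) ^ (2 * n ^ 2)) ^ 2)) ≠ 0 := by
      rw [← pow_mul, ← pow_mul]
      exact mul_ne_zero (hne _ (by positivity)) (hne _ (by positivity))
    rw [div_eq_iff hden]
    rw [hXeq]
    simp only [← map_pow, ← map_one φ, ← map_sub, ← map_mul]
    congr 1
    calc (1 - ((X : Polynomial ℚ) ^ (2 * n ^ 2)) ^ (2 * m)) *
          (1 - ((X : Polynomial ℚ) ^ (2 * n ^ 2)) ^ (2 * m - 1))
        = P * ((1 - (X : Polynomial ℚ) ^ (2 * n ^ 2)) *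
            (1 - ((X : Polynomial ℚ) ^ (2 * n ^ 2)) ^ 2)) := hpoly
      _ = P * ((1 - ((X : Polynomial ℚ) ^ (2 * n ^ 2)) ^ 1) *
            (1 - ((X : Polynomial ℚ) ^ (2 * n ^ 2)) ^ 2)) := by ring
  -- Step B : the right-hand side equals φ Bp
  have hB : (2 * (m : RatFunc ℚ) - 1) *
      ((m : RatFunc ℚ) - 2 * (n : RatFunc ℚ) * (m : RatFunc ℚ) * ((m : RatFunc ℚ) - 1) *
        (1 - RatFunc.X ^ (2 * n))) = φ Bp := by
    rw [hφ, hBp]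
    simp only [map_mul, map_sub, map_add, map_one, map_pow, map_natCast, map_ofNat,
      RatFunc.algebraMap_X]
  -- Gauss-type sum computation in ℕ
  have hnat : (∑ i ∈ range m, ∑ j ∈ range (2 * m - 1), (2 * n * i + n * j)) =
      2 * n * (m * (m - 1)) * (2 * m - 1) := by
    have g1 : (∑ i ∈ range m, i) * 2 = m * (m - 1) := Finset.sum_range_id_mul_two m
    have g2 : (∑ j ∈ range (2 * m - 1), j) * 2 = (2 * m - 1) * (2 * m - 1 - 1) :=
      Finset.sum_range_id_mul_two (2 * m - 1)
    have A : ∀ (c k : ℕ), (∑ j ∈ range k, (c + n * j)) = k * c + n * ∑ j ∈ range k, j := by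
      intro c k
      rw [Finset.sum_add_distrib, Finset.sum_const, smul_eq_mul, card_range, Finset.mul_sum]
    have expand2 : (∑ i ∈ range m, ∑ j ∈ range (2 * m - 1), (2 * n * i + n * j)) =
        (2 * m - 1) * (2 * n * (∑ i ∈ range m, i)) +
          m * (n * (∑ j ∈ range (2 * m - 1), j)) := by
      calc (∑ i ∈ range m, ∑ j ∈ range (2 * m - 1), (2 * n * i + n * j))
          = ∑ i ∈ range m, ((2 * m - 1) * (2 * n * i) +
              n * (∑ j ∈ range (2 * m - 1), j)) :=
            Finset.sum_congr rfl fun i _ => A (2 * n * i) (2 * m - 1)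
        _ = (∑ i ∈ range m, (2 * m - 1) * (2 * n * i)) +
              m * (n * (∑ j ∈ range (2 * m - 1), j)) := by
            rw [Finset.sum_add_distrib, Finset.sum_const, card_range, smul_eq_mul]
        _ = (2 * m - 1) * (2 * n * (∑ i ∈ range m, i)) +
              m * (n * (∑ j ∈ range (2 * m - 1), j)) := by
            rw [← Finset.mul_sum, ← Finset.mul_sum]
    apply Nat.eq_of_mul_eq_mul_left (show 0 < 2 by norm_num)
    rw [expand2]
    have h2m : 2 * m - 1 - 1 = 2 * (m - 1) := by omega
    calc 2 * ((2 * m - 1) * (2 * n * (∑ i ∈ range m, i)) +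
            m * (n * (∑ j ∈ range (2 * m - 1), j)))
        = (2 * m - 1) * (2 * n) * ((∑ i ∈ range m, i) * 2) +
            m * n * ((∑ j ∈ range (2 * m - 1), j) * 2) := by ring
      _ = (2 * m - 1) * (2 * n) * (m * (m - 1)) + m * n * ((2 * m - 1) * (2 * (m - 1))) := by
            rw [g1, g2, h2m]
      _ = 2 * (2 * n * (m * (m - 1)) * (2 * m - 1)) := by ring
  -- closed form for Bp as a double sum
  have hBclosed : Bp = ∑ i ∈ range m, ∑ j ∈ range (2 * m - 1),
      ((1 : Polynomial ℚ) + ((2 * n * i + n * j : ℕ) : Polynomial ℚ) * (t - 1)) := by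
    have hcast : (∑ i ∈ range m, ∑ j ∈ range (2 * m - 1),
        ((2 * n * i + n * j : ℕ) : Polynomial ℚ)) =
        ((2 * n * (m * (m - 1)) * (2 * m - 1) : ℕ) : Polynomial ℚ) := by
      exact_mod_cast congrArg (Nat.cast : ℕ → Polynomial ℚ) hnat
    have step : (∑ i ∈ range m, ∑ j ∈ range (2 * m - 1),
        ((1 : Polynomial ℚ) + ((2 * n * i + n * j : ℕ) : Polynomial ℚ) * (t - 1))) =
        ((m * (2 * m - 1) : ℕ) : Polynomial ℚ) * 1 +
          (∑ i ∈ range m, ∑ j ∈ range (2 * m - 1),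
            ((2 * n * i + n * j : ℕ) : Polynomial ℚ)) * (t - 1) := by
      rw [Finset.sum_congr rfl fun (i : ℕ) _ =>
        (Finset.sum_add_distrib (s := range (2 * m - 1))
          (f := fun _ => (1 : Polynomial ℚ))
          (g := fun j => ((2 * n * i + n * j : ℕ) : Polynomial ℚ) * (t - 1)))]
      rw [Finset.sum_add_distrib]
      congr 1
      · simp [Finset.sum_const, card_range]
      · rw [Finset.sum_mul]
        exact Finset.sum_congr rfl fun i _ => by rw [Finset.sum_mul]
    have c1 : ((m * (2 * m - 1) : ℕ) : Polynomial ℚ) = 2 * (m : Polynomial ℚ) * m - m := by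
      push_cast [Nat.cast_sub (show 1 ≤ 2 * m by omega)]
      ring
    have c2 : ((2 * n * (m * (m - 1)) * (2 * m - 1) : ℕ) : Polynomial ℚ) =
        2 * (n : Polynomial ℚ) * ((m : Polynomial ℚ) * ((m : Polynomial ℚ) - 1)) *
          (2 * (m : Polynomial ℚ) - 1) := by
      push_cast [Nat.cast_sub hm1, Nat.cast_sub (show 1 ≤ 2 * m by omega)]
      ring
    rw [step, hcast, c1, c2, hBp, ht]
    ring
  -- divisibility of the difference by the square of the cyclotomic polynomial
  have hdvd : (Polynomial.cyclotomic (2 * n) ℚ) ^ 2 ∣ P - Bp := by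
    have hcyc : Polynomial.cyclotomic (2 * n) ℚ ∣ (X : Polynomial ℚ) ^ (2 * n) - 1 :=
      Polynomial.cyclotomic.dvd_X_pow_sub_one _ _
    refine dvd_trans (pow_dvd_pow_of_dvd hcyc 2) ?_
    have hstep : P - Bp = ∑ i ∈ range m, ∑ j ∈ range (2 * m - 1),
        (t ^ (2 * n * i + n * j) - 1 -
          ((2 * n * i + n * j : ℕ) : Polynomial ℚ) * (t - 1)) := by
      rw [hP, hBclosed, ← Finset.sum_sub_distrib]
      refine Finset.sum_congr rfl fun i _ => ?_
      rw [← Finset.sum_sub_distrib]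
      refine Finset.sum_congr rfl fun j _ => ?_
      ring
    rw [hstep, show (X : Polynomial ℚ) ^ (2 * n) - 1 = t - 1 from rfl]
    exact Finset.dvd_sum fun i _ => Finset.dvd_sum fun j _ => key_dvd t _
  obtain ⟨Cp, hCp⟩ := hdvd
  exact ⟨Cp, by rw [hA, hB, ← map_sub, hCp, map_mul]⟩
end

section
/- For all positive integers m and n, [2mn choose 2n]_{q²} ≡ [2m choose 2]_{q^{2n²}} (mod Φ_{2n}(q)²). -/
open Polynomial Finset

section QbinomSqAux

lemma X_pow_ne_one' (c : ℕ) (hc : 0 < c) : (RatFunc.X : RatFunc ℚ) ^ c ≠ 1 := by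
  intro h
  have h1 : (algebraMap (Polynomial ℚ) (RatFunc ℚ)) (X ^ c) =
      (algebraMap (Polynomial ℚ) (RatFunc ℚ)) 1 := by
    simpa [map_pow, RatFunc.algebraMap_X] using h
  have h2 : (X : Polynomial ℚ) ^ c = 1 := RatFunc.algebraMap_injective ℚ h1
  have h3 := congrArg (Polynomial.eval 0) h2
  simp [zero_pow hc.ne'] at h3

lemma one_sub_rpow_ne (t : ℕ) (ht : 0 < t) (j : ℤ) (hj : 1 ≤ j) :
    (1 : RatFunc ℚ) - (RatFunc.X ^ t) ^ j ≠ 0 := by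
  obtain ⟨c, rfl⟩ : ∃ c : ℕ, j = (c : ℤ) := ⟨j.toNat, (Int.toNat_of_nonneg (by omega)).symm⟩
  rw [zpow_natCast, ← pow_mul]
  intro h
  have hc : 0 < c := by exact_mod_cast hj
  exact X_pow_ne_one' (t * c) (Nat.mul_pos ht hc) (by rw [sub_eq_zero] at h; exact h.symm)

lemma qbinom_nat (r : RatFunc ℚ) (N K : ℕ) (h : K ≤ N) :
    qbinom r N K = (∏ i ∈ Finset.range K, (1 - r ^ ((N : ℤ) - i))) /
      (∏ i ∈ Finset.range K, (1 - r ^ ((i : ℤ) + 1))) := by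
  rw [qbinom, if_pos ⟨by positivity, by exact_mod_cast h⟩]
  simp

lemma qbinom_zero (r : RatFunc ℚ) {n k : ℤ} (h : ¬(0 ≤ k ∧ k ≤ n)) : qbinom r n k = 0 :=
  if_neg h

section general
variable {r : RatFunc ℚ} (hr0 : r ≠ 0) (hne : ∀ j : ℤ, 1 ≤ j → 1 - r ^ j ≠ 0)
include hne

lemma DD_ne (K : ℕ) : (∏ i ∈ Finset.range K, ((1:RatFunc ℚ) - r ^ ((i : ℤ) + 1))) ≠ 0 := by
  rw [Finset.prod_ne_zero_iff]
  exact fun i _ => hne _ (by omega)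

lemma qbinom_self (N : ℕ) : qbinom r N N = 1 := by
  rw [qbinom_nat _ N N le_rfl]
  have h : ∀ j ∈ Finset.range N,
      (1 - r ^ ((N : ℤ) - j)) = 1 - r ^ (((N - 1 - j : ℕ) : ℤ) + 1) := by
    intro j hj
    simp only [Finset.mem_range] at hj
    have he : (N : ℤ) - j = ((N - 1 - j : ℕ) : ℤ) + 1 := by omega
    rw [he]
  rw [Finset.prod_congr rfl h,
    show (∏ x ∈ Finset.range N, (1 - r ^ (((N - 1 - x : ℕ) : ℤ) + 1))) =
      ∏ i ∈ Finset.range N, (1 - r ^ ((i : ℤ) + 1)) from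
        Finset.prod_range_reflect (fun i => (1 - r ^ ((i : ℤ) + 1))) N]
  exact div_self (DD_ne hne N)

include hr0 in
lemma qbinom_pascal (N K : ℕ) (h : K ≤ N) :
    qbinom r (N + 1 : ℕ) (K + 1 : ℕ) =
      qbinom r N K + r ^ ((K : ℤ) + 1) * qbinom r N (K + 1 : ℕ) := by
  rcases eq_or_lt_of_le h with rfl | hlt
  · rw [qbinom_self hne, qbinom_self hne, qbinom_zero _ (by push_cast; omega)]
    ring
  · have hKN : K + 1 ≤ N := hlt
    rw [qbinom_nat _ (N+1) (K+1) (by omega), qbinom_nat _ N K (by omega),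
      qbinom_nat _ N (K+1) (by omega)]
    set NNK := ∏ i ∈ Finset.range K, (1 - r ^ ((N : ℤ) - i)) with hNNK
    set DDK := ∏ i ∈ Finset.range K, (1 - r ^ ((i : ℤ) + 1)) with hDDK
    have h1 : ∏ i ∈ Finset.range (K+1), (1 - r ^ (((N+1 : ℕ) : ℤ) - i)) =
        (1 - r ^ ((N : ℤ) + 1)) * NNK := by
      rw [Finset.prod_range_succ']
      rw [mul_comm]
      have e0 : ((N+1 : ℕ) : ℤ) - ((0:ℕ) : ℤ) = (N : ℤ) + 1 := by push_cast; ring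
      rw [e0]
      congr 1
      apply Finset.prod_congr rfl
      intro i _
      have he : ((N+1 : ℕ) : ℤ) - ((i+1 : ℕ) : ℤ) = (N : ℤ) - i := by push_cast; ring
      rw [he]
    have h2 : ∏ i ∈ Finset.range (K+1), (1 - r ^ ((N : ℤ) - i)) =
        NNK * (1 - r ^ ((N : ℤ) - K)) := Finset.prod_range_succ _ _
    have h3 : ∏ i ∈ Finset.range (K+1), (1 - r ^ ((i : ℤ) + 1)) =
        DDK * (1 - r ^ ((K : ℤ) + 1)) := Finset.prod_range_succ _ _
    rw [h1, h2, h3]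
    have hD : DDK ≠ 0 := DD_ne hne K
    have hK1 : (1 - r ^ ((K : ℤ) + 1)) ≠ 0 := hne _ (by omega)
    have hpow : r ^ ((K : ℤ) + 1) * r ^ ((N : ℤ) - K) = r ^ ((N : ℤ) + 1) := by
      rw [← zpow_add₀ hr0]; congr 1; ring
    have key : (1 - r ^ ((N:ℤ)+1)) * NNK =
        NNK * (1 - r^((K:ℤ)+1)) + r^((K:ℤ)+1) * (NNK * (1 - r^((N:ℤ) - K))) := by
      linear_combination NNK * hpow
    rw [key, add_div, mul_div_assoc (r ^ ((K:ℤ)+1))]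
    congr 1
    rw [div_eq_div_iff (by exact mul_ne_zero hD hK1) hD]
    ring
end general

lemma qbinom_exists_poly (t : ℕ) (ht : 0 < t) :
    ∀ N K : ℕ, ∃ p : Polynomial ℚ,
      qbinom (RatFunc.X ^ t) N K = algebraMap (Polynomial ℚ) (RatFunc ℚ) p := by
  have hr0 : (RatFunc.X : RatFunc ℚ) ^ t ≠ 0 := pow_ne_zero _ RatFunc.X_ne_zero
  have hne := one_sub_rpow_ne t ht
  intro N
  induction N with
  | zero =>
    intro K
    cases K with
    | zero => exact ⟨1, by rw [show ((0:ℕ):ℤ) = ((0:ℕ):ℤ) from rfl, qbinom_self hne 0, map_one]⟩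
    | succ K => exact ⟨0, by rw [qbinom_zero _ (by push_cast; omega), map_zero]⟩
  | succ N ih =>
    intro K
    cases K with
    | zero =>
      refine ⟨1, ?_⟩
      rw [qbinom_nat _ (N+1) 0 (by omega)]
      simp
    | succ K =>
      by_cases hK : K ≤ N
      · obtain ⟨p1, hp1⟩ := ih K
        obtain ⟨p2, hp2⟩ := ih (K+1)
        refine ⟨p1 + X ^ (t*(K+1)) * p2, ?_⟩
        rw [qbinom_pascal hr0 hne N K hK, hp1, hp2, map_add, map_mul, map_pow,
          RatFunc.algebraMap_X]
        congr 1
        rw [pow_mul, ← zpow_natCast ((RatFunc.X : RatFunc ℚ)^t) (K+1)]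
        push_cast
        ring
      · exact ⟨0, by rw [qbinom_zero _ (by push_cast; omega), map_zero]⟩

end QbinomSqAux

noncomputable def fp (a : ℕ) : Polynomial ℚ := 1 - X ^ (2*a)
noncomputable def sig (n k : ℕ) : Polynomial ℚ := ∑ i ∈ Finset.range k, X ^ (2*n*i)

lemma fp_mul (n k : ℕ) : fp (n*k) = (1 - X^(2*n)) * sig n k := by
  unfold fp sig
  have h := geom_sum_mul (X ^ (2*n) : Polynomial ℚ) k
  have e1 : (X : Polynomial ℚ)^(2*(n*k)) = (X^(2*n))^k := by rw [← pow_mul, mul_assoc]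
  have e2 : ∀ i ∈ Finset.range k, (X : Polynomial ℚ)^(2*n*i) = (X^(2*n))^i := fun i _ => by
    rw [← pow_mul]
  rw [e1, Finset.sum_congr rfl e2]
  linear_combination h

lemma fp_congr {a b : ℕ} (h : a = b) : fp a = fp b := by rw [h]

lemma subm1 (m n : ℕ) (hm : 0 < m) : (2*m-1)*n + n = 2*m*n := by
  rw [Nat.sub_mul]
  have hx : 1*n ≤ 2*m*n := Nat.mul_le_mul_right n (by omega)
  omega

lemma subm2 (m n : ℕ) (hm : 0 < m) : (2*m-2)*n + n + n = 2*m*n := by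
  rw [Nat.sub_mul]
  have hx : 2*n ≤ 2*m*n := Nat.mul_le_mul_right n (by omega)
  omega

noncomputable def NAp (m n : ℕ) : Polynomial ℚ := sig n (2*m) * sig n (2*m-1) *
  ∏ i ∈ Finset.range (n-1), (fp ((2*m-1)*n + (i+1)) * fp ((2*m-2)*n + (i+1)))
noncomputable def DAp (n : ℕ) : Polynomial ℚ := sig n 1 * sig n 2 *
  ∏ i ∈ Finset.range (n-1), (fp (i+1) * fp (n + (i+1)))
noncomputable def NBp (m n : ℕ) : Polynomial ℚ := sig n (n*(2*m)) * sig n (n*(2*m-1))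
noncomputable def DBp (n : ℕ) : Polynomial ℚ := sig n (n*1) * sig n (n*2)

lemma idA_num (m n : ℕ) (hm : 0 < m) (hn : 0 < n) :
    ∏ i ∈ Finset.range (2*n), fp (2*m*n - i) = (1 - X^(2*n))^2 * NAp m n := by
  have e1 := subm1 m n hm
  have e2 := subm2 m n hm
  rw [show 2*n = n + n from by ring, Finset.prod_range_add]
  have hb1 : ∏ i ∈ Finset.range n, fp (2*m*n - i) =
      ((1 - X^(2*n)) * sig n (2*m)) * ∏ i ∈ Finset.range (n-1), fp ((2*m-1)*n + (i+1)) := by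
    have h := Finset.prod_range_succ' (fun i => fp (2*m*n - i)) (n-1)
    rw [show n - 1 + 1 = n from by omega] at h
    have hf : fp (2*m*n - 0) = (1 - X^(2*n)) * sig n (2*m) := by
      rw [fp_congr (show 2*m*n - 0 = n*(2*m) from by rw [Nat.sub_zero]; ring), fp_mul]
    have hrefl := Finset.prod_range_reflect (fun i => fp ((2*m-1)*n + (i+1))) (n-1)
    have hc : ∀ j ∈ Finset.range (n-1), fp (2*m*n - (j+1)) =
        fp ((2*m-1)*n + (n-1-1-j+1)) := fun j hj => fp_congr (by
      simp only [Finset.mem_range] at hj; omega)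
    rw [h, hf, Finset.prod_congr rfl hc, hrefl]
    ring
  have hb2 : ∏ i ∈ Finset.range n, fp (2*m*n - (n + i)) =
      ((1 - X^(2*n)) * sig n (2*m-1)) * ∏ i ∈ Finset.range (n-1), fp ((2*m-2)*n + (i+1)) := by
    have h := Finset.prod_range_succ' (fun i => fp (2*m*n - (n + i))) (n-1)
    rw [show n - 1 + 1 = n from by omega] at h
    have hf : fp (2*m*n - (n + 0)) = (1 - X^(2*n)) * sig n (2*m-1) := by
      rw [fp_congr (show 2*m*n - (n+0) = n*(2*m-1) from by rw [Nat.mul_comm n (2*m-1)]; omega),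
        fp_mul]
    have hrefl := Finset.prod_range_reflect (fun i => fp ((2*m-2)*n + (i+1))) (n-1)
    have hc : ∀ j ∈ Finset.range (n-1), fp (2*m*n - (n + (j+1))) =
        fp ((2*m-2)*n + (n-1-1-j+1)) := fun j hj => fp_congr (by
      simp only [Finset.mem_range] at hj; omega)
    rw [h, hf, Finset.prod_congr rfl hc, hrefl]
    ring
  rw [hb1, hb2, NAp, Finset.prod_mul_distrib]
  ring

lemma idA_den (n : ℕ) (hn : 0 < n) :
    ∏ i ∈ Finset.range (2*n), fp (i+1) = (1 - X^(2*n))^2 * DAp n := by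
  rw [show 2*n = n + n from by ring, Finset.prod_range_add]
  have hb1 : ∏ i ∈ Finset.range n, fp (i+1) =
      ((1 - X^(2*n)) * sig n 1) * ∏ i ∈ Finset.range (n-1), fp (i+1) := by
    have h := Finset.prod_range_succ (fun i => fp (i+1)) (n-1)
    rw [show n - 1 + 1 = n from by omega] at h
    have hf : fp n = (1 - X^(2*n)) * sig n 1 := by
      rw [fp_congr (show n = n*1 from by ring), fp_mul]
    rw [h, hf]
    ring
  have hb2 : ∏ i ∈ Finset.range n, fp (n + i + 1) =
      ((1 - X^(2*n)) * sig n 2) * ∏ i ∈ Finset.range (n-1), fp (n + (i+1)) := by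
    have h := Finset.prod_range_succ (fun i => fp (n + i + 1)) (n-1)
    rw [show n - 1 + 1 = n from by omega] at h
    have hf : fp (n + (n-1) + 1) = (1 - X^(2*n)) * sig n 2 := by
      rw [fp_congr (show n + (n-1) + 1 = n*2 from by omega), fp_mul]
    have hc : ∀ j ∈ Finset.range (n-1), fp (n + j + 1) = fp (n + (j+1)) :=
      fun j hj => fp_congr (by omega)
    rw [h, hf, Finset.prod_congr rfl hc]
    ring
  rw [hb1, hb2, DAp, Finset.prod_mul_distrib]
  ring

lemma map_fp (c : ℕ) : algebraMap (Polynomial ℚ) (RatFunc ℚ) (fp c) = 1 - RatFunc.X ^ (2*c) := by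
  unfold fp
  rw [map_sub, map_one, map_pow, RatFunc.algebraMap_X]

lemma one_sub_pow_eq_map (t c : ℕ) :
    (1:RatFunc ℚ) - (RatFunc.X ^ t) ^ ((c:ℕ):ℤ) =
      algebraMap (Polynomial ℚ) (RatFunc ℚ) (1 - X^(t*c)) := by
  rw [zpow_natCast, ← pow_mul, map_sub, map_one, map_pow, RatFunc.algebraMap_X]

lemma fp_ne (c : ℕ) (hc : 0 < c) : fp c ≠ 0 := by
  intro h
  have h2 := congrArg (Polynomial.eval 0) h
  simp [fp, zero_pow (by omega : 2*c ≠ 0)] at h2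

lemma sig_ne (n k : ℕ) (hn : 0 < n) (hk : 0 < k) : sig n k ≠ 0 := by
  intro h
  have h2 := congrArg (Polynomial.eval 0) h
  rw [sig] at h2
  simp only [Polynomial.eval_finset_sum, Polynomial.eval_pow, Polynomial.eval_X,
    Polynomial.eval_zero] at h2
  rw [Finset.sum_eq_single 0 (fun i _ hi => by
      rw [zero_pow (Nat.mul_ne_zero (Nat.mul_ne_zero two_ne_zero hn.ne') hi)]) (fun hi => absurd (Finset.mem_range.mpr hk) hi)] at h2
  simp at h2

lemma qbinom_A_eq (m n : ℕ) (hm : 0 < m) (hn : 0 < n) :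
    qbinom (RatFunc.X ^ 2) (2*(m:ℤ)*n) (2*(n:ℤ)) *
      algebraMap (Polynomial ℚ) (RatFunc ℚ) (DAp n) =
    algebraMap (Polynomial ℚ) (RatFunc ℚ) (NAp m n) := by
  have hle : 2*n ≤ 2*m*n := Nat.mul_le_mul_right n (by omega)
  have hcast1 : (2*(m:ℤ)*n) = ((2*m*n : ℕ) : ℤ) := by push_cast; ring
  have hcast2 : (2*(n:ℤ)) = ((2*n : ℕ) : ℤ) := by push_cast; ring
  rw [hcast1, hcast2, qbinom_nat _ (2*m*n) (2*n) hle]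
  have hnum : ∏ i ∈ Finset.range (2*n),
      ((1:RatFunc ℚ) - (RatFunc.X^2) ^ (((2*m*n:ℕ):ℤ) - (i:ℤ))) =
      algebraMap (Polynomial ℚ) (RatFunc ℚ) (∏ i ∈ Finset.range (2*n), fp (2*m*n - i)) := by
    rw [map_prod]
    apply Finset.prod_congr rfl
    intro i hi
    simp only [Finset.mem_range] at hi
    have he : ((2*m*n:ℕ):ℤ) - (i:ℤ) = ((2*m*n - i : ℕ):ℤ) := by omega
    rw [he, one_sub_pow_eq_map 2 (2*m*n - i)]
    rfl
  have hden : ∏ i ∈ Finset.range (2*n),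
      ((1:RatFunc ℚ) - (RatFunc.X^2) ^ ((i:ℤ) + 1)) =
      algebraMap (Polynomial ℚ) (RatFunc ℚ) (∏ i ∈ Finset.range (2*n), fp (i+1)) := by
    rw [map_prod]
    apply Finset.prod_congr rfl
    intro i _
    have he : (i:ℤ) + 1 = ((i + 1 : ℕ):ℤ) := by push_cast; ring
    rw [he, one_sub_pow_eq_map 2 (i+1)]
    rfl
  rw [hnum, hden, idA_num m n hm hn, idA_den n hn]
  have hu : algebraMap (Polynomial ℚ) (RatFunc ℚ) ((1 - X^(2*n))^2) ≠ 0 := by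
    exact RatFunc.algebraMap_ne_zero (pow_ne_zero _ (fp_ne n hn))
  have hd : algebraMap (Polynomial ℚ) (RatFunc ℚ) (DAp n) ≠ 0 := by
    apply RatFunc.algebraMap_ne_zero
    rw [DAp]
    refine mul_ne_zero (mul_ne_zero (sig_ne n 1 hn one_pos) (sig_ne n 2 hn two_pos)) ?_
    rw [Finset.prod_ne_zero_iff]
    exact fun i _ => mul_ne_zero (fp_ne _ (by omega)) (fp_ne _ (by omega))
  rw [map_mul, map_mul, mul_div_mul_left _ _ hu, div_mul_cancel₀ _ hd]

lemma qbinom_B_eq (m n : ℕ) (hm : 0 < m) (hn : 0 < n) :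
    qbinom (RatFunc.X ^ (2*n^2)) (2*(m:ℤ)) 2 *
      algebraMap (Polynomial ℚ) (RatFunc ℚ) (DBp n) =
    algebraMap (Polynomial ℚ) (RatFunc ℚ) (NBp m n) := by
  have hcast1 : (2*(m:ℤ)) = ((2*m : ℕ) : ℤ) := by push_cast; ring
  have hcast2 : (2:ℤ) = ((2 : ℕ) : ℤ) := by norm_num
  have hfp : ∀ c : ℕ, (1:RatFunc ℚ) - (RatFunc.X^(2*n^2)) ^ ((c:ℕ):ℤ) =
      algebraMap (Polynomial ℚ) (RatFunc ℚ) (fp (n*(n*c))) := by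
    intro c
    rw [one_sub_pow_eq_map]
    unfold fp
    congr 2
    ring
  rw [hcast1, hcast2, qbinom_nat _ (2*m) 2 (by omega)]
  have hnum : ∏ i ∈ Finset.range 2,
      ((1:RatFunc ℚ) - (RatFunc.X^(2*n^2)) ^ (((2*m:ℕ):ℤ) - (i:ℤ))) =
      algebraMap (Polynomial ℚ) (RatFunc ℚ) (fp (n*(n*(2*m))) * fp (n*(n*(2*m-1)))) := by
    rw [Finset.prod_range_succ, Finset.prod_range_one, map_mul]
    congr 1
    · rw [show ((2*m:ℕ):ℤ) - ((0:ℕ):ℤ) = ((2*m:ℕ):ℤ) from by push_cast; ring, hfp]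
    · rw [show ((2*m:ℕ):ℤ) - ((1:ℕ):ℤ) = ((2*m-1:ℕ):ℤ) from by omega, hfp]
  have hden : ∏ i ∈ Finset.range 2,
      ((1:RatFunc ℚ) - (RatFunc.X^(2*n^2)) ^ ((i:ℤ) + 1)) =
      algebraMap (Polynomial ℚ) (RatFunc ℚ) (fp (n*(n*1)) * fp (n*(n*2))) := by
    rw [Finset.prod_range_succ, Finset.prod_range_one, map_mul]
    congr 1
    · rw [show ((0:ℕ):ℤ) + 1 = ((1:ℕ):ℤ) from by norm_num, hfp]
    · rw [show ((1:ℕ):ℤ) + 1 = ((2:ℕ):ℤ) from by norm_num, hfp]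
  rw [hnum, hden]
  have e1 : fp (n*(n*(2*m))) * fp (n*(n*(2*m-1))) = (1 - X^(2*n))^2 * NBp m n := by
    rw [fp_mul, fp_mul, NBp]; ring
  have e2 : fp (n*(n*1)) * fp (n*(n*2)) = (1 - X^(2*n))^2 * DBp n := by
    rw [fp_mul, fp_mul, DBp]; ring
  rw [e1, e2]
  have hu : algebraMap (Polynomial ℚ) (RatFunc ℚ) ((1 - X^(2*n))^2) ≠ 0 := by
    exact RatFunc.algebraMap_ne_zero (pow_ne_zero _ (fp_ne n hn))
  have hd : algebraMap (Polynomial ℚ) (RatFunc ℚ) (DBp n) ≠ 0 := by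
    apply RatFunc.algebraMap_ne_zero
    rw [DBp]
    exact mul_ne_zero (sig_ne n (n*1) hn (by omega)) (sig_ne n (n*2) hn (by omega))
  rw [map_mul, map_mul, mul_div_mul_left _ _ hu, div_mul_cancel₀ _ hd]

noncomputable def A0p (n : ℕ) : Polynomial ℚ := ∏ i ∈ Finset.range (n-1), (fp (i+1))^2
noncomputable def Wp (n : ℕ) : Polynomial ℚ :=
  ∑ i ∈ Finset.range (n-1), (X^(2*(i+1)) * fp (i+1) * ∏ t ∈ (Finset.range (n-1)).erase i, (fp (t+1))^2)

lemma prod_linear {R : Type*} [CommRing R] (u : R) (hu2 : u * u = 0) (F : Finset ℕ)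
    (a c : ℕ → R) :
    ∏ s ∈ F, (a s + c s * u) = ∏ s ∈ F, a s + (∑ s ∈ F, c s * ∏ t ∈ F.erase s, a t) * u := by
  induction F using Finset.induction_on with
  | empty => simp
  | @insert i F hi ih =>
    rw [Finset.prod_insert hi, Finset.prod_insert hi, ih, Finset.sum_insert hi,
      Finset.erase_insert hi]
    have he : ∀ s ∈ F, c s * ∏ t ∈ (insert i F).erase s, a t =
        c s * (a i * ∏ t ∈ F.erase s, a t) := by
      intro s hs
      rw [Finset.erase_insert_of_ne (fun h => hi (by rwa [h]))]
      rw [Finset.prod_insert (fun hmem => hi (Finset.mem_of_mem_erase hmem))]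
    rw [Finset.sum_congr rfl he]
    have hs2 : ∑ s ∈ F, c s * (a i * ∏ t ∈ F.erase s, a t) =
        a i * ∑ s ∈ F, c s * ∏ t ∈ F.erase s, a t := by
      rw [Finset.mul_sum]
      exact Finset.sum_congr rfl (fun s _ => by ring)
    rw [hs2]
    linear_combination (c i * (∑ s ∈ F, c s * ∏ t ∈ F.erase s, a t)) * hu2

lemma key_phi (n : ℕ) (hn : 0 < n) :
    Polynomial.cyclotomic (2*n) ℚ ∣ ((n : Polynomial ℚ) - 1) * A0p n + 2 * Wp n := by
  set Φ := Polynomial.cyclotomic (2*n) ℚ with hΦ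
  have hirr : Irreducible Φ := Polynomial.cyclotomic.irreducible_rat (by omega)
  haveI : Fact (Irreducible Φ) := ⟨hirr⟩
  set K := AdjoinRoot Φ
  haveI : CharZero K := charZero_of_injective_algebraMap (algebraMap ℚ K).injective
  set x : K := AdjoinRoot.root Φ with hxdef
  have hroot : Polynomial.IsRoot (Polynomial.cyclotomic (2*n) K) x := by
    have h1 : Polynomial.cyclotomic (2*n) K = Polynomial.map (AdjoinRoot.of Φ) Φ :=
      (Polynomial.map_cyclotomic (2*n) (AdjoinRoot.of Φ)).symm
    rw [h1]
    exact AdjoinRoot.isRoot_root Φ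
  haveI : NeZero ((2*n : ℕ) : K) := ⟨Nat.cast_ne_zero.mpr (by omega)⟩
  have hx : IsPrimitiveRoot x (2*n) := (Polynomial.isRoot_cyclotomic_iff).mp hroot
  rw [← AdjoinRoot.mk_eq_zero]
  set π := AdjoinRoot.mk Φ with hπ
  set y : ℕ → K := fun i => x ^ (2*(i+1)) with hy
  have hπX : ∀ c : ℕ, π (X ^ c) = x ^ c := fun c => by rw [map_pow, AdjoinRoot.mk_X]
  have hπfp : ∀ i : ℕ, π (fp (i+1)) = 1 - y i := fun i => by
    rw [fp, map_sub, map_one, hπX]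
  have hyne : ∀ i, i < n - 1 → 1 - y i ≠ 0 := by
    intro i hi h
    have h1 : y i = 1 := by linear_combination -h
    have h2 : (2*n) ∣ 2*(i+1) := hx.pow_eq_one_iff_dvd (2*(i+1)) |>.mp h1
    rcases h2 with ⟨k, hk⟩
    rcases Nat.eq_zero_or_pos k with rfl | hk0
    · simp at hk
    · have h3 : 2*n*1 ≤ 2*n*k := Nat.mul_le_mul_left _ hk0
      omega
  have hπA0 : π (A0p n) = ∏ i ∈ Finset.range (n-1), (1 - y i)^2 := by
    rw [A0p, map_prod]
    exact Finset.prod_congr rfl fun i _ => by rw [map_pow, hπfp]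
  have hπW : π (Wp n) = ∑ i ∈ Finset.range (n-1),
      (y i * (1 - y i) * ∏ t ∈ (Finset.range (n-1)).erase i, (1 - y t)^2) := by
    rw [Wp, map_sum]
    refine Finset.sum_congr rfl fun i _ => ?_
    have hpr : π (∏ t ∈ (Finset.range (n-1)).erase i, (fp (t+1))^2) =
        ∏ t ∈ (Finset.range (n-1)).erase i, (1 - y t)^2 := by
      rw [map_prod]
      exact Finset.prod_congr rfl fun t _ => by rw [map_pow, hπfp]
    rw [map_mul, map_mul, hπX, hπfp, hpr]
  rw [map_add, map_mul, map_mul, map_sub, map_one, map_natCast, map_ofNat, hπA0, hπW]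
  set P : K := ∏ i ∈ Finset.range (n-1), (1 - y i)^2 with hP
  have hsum : ∀ i ∈ Finset.range (n-1),
      y i * (1 - y i) * ∏ t ∈ (Finset.range (n-1)).erase i, (1 - y t)^2 =
      (y i / (1 - y i)) * P := by
    intro i hi
    simp only [Finset.mem_range] at hi
    rw [hP, ← Finset.mul_prod_erase _ _ (Finset.mem_range.mpr hi)]
    have := hyne i hi
    rw [div_mul_eq_mul_div, eq_div_iff this]
    ring
  rw [Finset.sum_congr rfl hsum, ← Finset.sum_mul]
  have hS : 2 * (∑ i ∈ Finset.range (n-1), y i / (1 - y i)) = 1 - (n : K) := by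
    have hrefl := Finset.sum_range_reflect (fun i => y i / (1 - y i)) (n-1)
    have hpair : ∀ i ∈ Finset.range (n-1),
        y i / (1 - y i) + y (n-1-1-i) / (1 - y (n-1-1-i)) = -1 := by
      intro i hi
      simp only [Finset.mem_range] at hi
      have h1 : 1 - y i ≠ 0 := hyne i hi
      have h2 : 1 - y (n-1-1-i) ≠ 0 := hyne _ (by omega)
      have hprod : y i * y (n-1-1-i) = 1 := by
        rw [hy]
        rw [← pow_add, show 2*(i+1) + 2*(n-1-1-i+1) = 2*n from by omega]
        exact hx.pow_eq_one
      rw [div_add_div _ _ h1 h2, div_eq_iff (mul_ne_zero h1 h2)]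
      linear_combination -hprod
    have h2S : 2 * (∑ i ∈ Finset.range (n-1), y i / (1 - y i)) =
        ∑ i ∈ Finset.range (n-1),
          (y i / (1 - y i) + y (n-1-1-i) / (1 - y (n-1-1-i))) := by
      rw [Finset.sum_add_distrib, hrefl]
      ring
    rw [h2S, Finset.sum_congr rfl hpair, Finset.sum_const, Finset.card_range]
    have : ((n-1 : ℕ) : K) = (n : K) - 1 := by
      rw [Nat.cast_sub hn]; norm_num
    rw [nsmul_eq_mul, this]
    ring
  linear_combination P * hS

lemma fold2 {Q : Type*} [CommRing Q] {u : Q} (hu2 : u*u = 0) (a b c d : Q) :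
    (a + b*u)*(c + d*u) = a*c + (a*d + b*c)*u := by linear_combination b*d*hu2

lemma foldL {Q : Type*} [CommRing Q] {u : Q} (hu2 : u*u = 0)
    (a1 b1 a2 b2 a3 b3 a4 b4 a5 b5 : Q) :
    ((a1 + b1*u)*(a2 + b2*u))*((a3 + b3*u)*(a4 + b4*u))*(a5 + b5*u) =
    a1*a2*a3*a4*a5 + (b1*a2*a3*a4*a5 + a1*b2*a3*a4*a5 + a1*a2*b3*a4*a5 +
      a1*a2*a3*b4*a5 + a1*a2*a3*a4*b5)*u := by
  rw [fold2 hu2 a1 b1 a2 b2, fold2 hu2 a3 b3 a4 b4,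
    fold2 hu2 (a1*a2) (a1*b2 + b1*a2) (a3*a4) (a3*b4 + b3*a4),
    fold2 hu2 (a1*a2*(a3*a4)) (a1*a2*(a3*b4 + b3*a4) + (a1*b2 + b1*a2)*(a3*a4)) a5 b5]
  ring

set_option maxHeartbeats 1000000 in
lemma KD (m n : ℕ) (hm : 0 < m) (hn : 0 < n) :
    (Polynomial.cyclotomic (2*n) ℚ)^2 ∣ NAp m n * DBp n - NBp m n * DAp n := by
  set Φ := Polynomial.cyclotomic (2*n) ℚ with hΦ
  set I := Ideal.span {Φ^2} with hI
  set π := Ideal.Quotient.mk I with hπdef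
  have hgoal : π (NAp m n * DBp n) = π (NBp m n * DAp n) → Φ^2 ∣ NAp m n * DBp n - NBp m n * DAp n := by
    intro h
    have h2 := Ideal.Quotient.eq.mp h
    rwa [hI, Ideal.mem_span_singleton] at h2
  apply hgoal
  have hdvd1 : Φ ∣ X^(2*n) - 1 := Polynomial.cyclotomic.dvd_X_pow_sub_one (2*n) ℚ
  have hmemZ : ∀ z : Polynomial ℚ, Φ^2 ∣ z → π z = 0 := fun z hz => by
    rw [Ideal.Quotient.eq_zero_iff_mem, hI, Ideal.mem_span_singleton]; exact hz
  set u := π (X^(2*n) - 1) with hu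
  have hu2 : u * u = 0 := by
    rw [hu, ← map_mul]
    exact hmemZ _ (by rw [pow_two]; exact mul_dvd_mul hdvd1 hdvd1)
  set M : ℚ[X] ⧸ I := ((m : ℚ[X] ⧸ I)) with hM
  set N : ℚ[X] ⧸ I := ((n : ℚ[X] ⧸ I)) with hN
  have h2unit : IsUnit (2 : ℚ[X] ⧸ I) := by
    have e : ((2:ℚ[X] ⧸ I)) = algebraMap ℚ _ 2 := by rw [map_ofNat]
    rw [e]
    exact (isUnit_iff_ne_zero.mpr two_ne_zero).map (algebraMap ℚ (ℚ[X] ⧸ I))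
  have hXn : π (X^(2*n)) = 1 + u := by rw [hu, map_sub, map_one]; ring
  have hpow1u : ∀ c : ℕ, ((1:ℚ[X] ⧸ I) + u)^c = 1 + (c : ℚ[X] ⧸ I)*u := by
    intro c
    induction c with
    | zero => simp
    | succ c ih =>
      rw [pow_succ, ih]
      push_cast
      linear_combination (c : ℚ[X] ⧸ I) * hu2
  have hsig2 : ∀ k : ℕ, (2:ℚ[X] ⧸ I) * π (sig n k) =
      2*(k : ℚ[X] ⧸ I) + ((k*(k-1) : ℕ) : ℚ[X] ⧸ I) * u := by
    intro k
    have hterm : ∀ i ∈ Finset.range k, π (X^(2*n*i)) = 1 + (i : ℚ[X] ⧸ I)*u := by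
      intro i _
      rw [show (X:ℚ[X])^(2*n*i) = (X^(2*n))^i from by rw [← pow_mul], map_pow, hXn, hpow1u]
    have hs : π (sig n k) = (k : ℚ[X] ⧸ I) + (∑ i ∈ Finset.range k, (i : ℚ[X] ⧸ I)) * u := by
      rw [sig, map_sum, Finset.sum_congr rfl hterm, Finset.sum_add_distrib,
        Finset.sum_const, Finset.card_range, ← Finset.sum_mul]
      simp
    rw [hs]
    have hgauss : (∑ i ∈ Finset.range k, (i : ℚ[X] ⧸ I)) * 2 = ((k*(k-1) : ℕ) : ℚ[X] ⧸ I) := by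
      have h := Finset.sum_range_id_mul_two k
      calc (∑ i ∈ Finset.range k, (i : ℚ[X] ⧸ I)) * 2
          = (((∑ i ∈ Finset.range k, i) * 2 : ℕ) : ℚ[X] ⧸ I) := by push_cast; ring
        _ = ((k*(k-1) : ℕ) : ℚ[X] ⧸ I) := by rw [h]
    linear_combination u * hgauss
  have hπXpow : ∀ c s : ℕ, π (X^(2*(c*n+s))) = π (X^(2*s)) * (1 + (c:ℚ[X] ⧸ I) * u) := by
    intro c s
    rw [show (X:ℚ[X])^(2*(c*n+s)) = (X^(2*n))^c * X^(2*s) from by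
      rw [← pow_mul, ← pow_add]; congr 1; ring]
    rw [map_mul, map_pow, hXn, hpow1u]
    ring
  have hfp' : ∀ c s : ℕ, π (fp (c*n+s)) = 1 - π (X^(2*s)) * (1 + (c:ℚ[X] ⧸ I)*u) := by
    intro c s
    rw [fp, map_sub, map_one, hπXpow]
  -- cast helpers
  have c1 : ((2*m-1 : ℕ) : ℚ[X] ⧸ I) = 2*M-1 := by
    rw [Nat.cast_sub (by omega)]; push_cast; ring
  have c2 : ((2*m-2 : ℕ) : ℚ[X] ⧸ I) = 2*M-2 := by
    rw [Nat.cast_sub (by omega)]; push_cast; ring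
  -- sigma values
  have S1' : π (sig n (2*m)) = 2*M + M*(2*M-1)*u := by
    apply h2unit.mul_left_cancel
    rw [hsig2]
    have e2 : ((2*m*(2*m-1) : ℕ) : ℚ[X] ⧸ I) = 2*M*(2*M-1) := by
      rw [Nat.cast_mul, c1]; push_cast; ring
    rw [e2]; push_cast; ring
  have S2' : π (sig n (2*m-1)) = (2*M-1) + (2*M-1)*(M-1)*u := by
    apply h2unit.mul_left_cancel
    rw [hsig2]
    have e2 : (((2*m-1)*(2*m-1-1) : ℕ) : ℚ[X] ⧸ I) = 2*((2*M-1)*(M-1)) := by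
      rw [show 2*m-1-1 = 2*m-2 from by omega, Nat.cast_mul, c1, c2]; ring
    rw [e2, c1]; ring
  have S3h : (2:ℚ[X] ⧸ I) * π (sig n (n*1)) = 2*N + N*(N-1)*u := by
    rw [hsig2]
    have e2 : ((n*1*(n*1-1) : ℕ) : ℚ[X] ⧸ I) = N*(N-1) := by
      rw [show n*1*(n*1-1) = n*(n-1) from by simp, Nat.cast_mul, Nat.cast_sub hn]
      push_cast; ring
    rw [e2]; push_cast; ring
  have S4' : π (sig n (n*2)) = 2*N + N*(2*N-1)*u := by
    apply h2unit.mul_left_cancel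
    rw [hsig2]
    have e2 : ((n*2*(n*2-1) : ℕ) : ℚ[X] ⧸ I) = 2*(N*(2*N-1)) := by
      rw [Nat.cast_mul, Nat.cast_sub (by omega : 1 ≤ n*2)]
      push_cast; ring
    rw [e2]; push_cast; ring
  have S5' : π (sig n (n*(2*m))) = 2*M*N + M*N*(2*M*N-1)*u := by
    apply h2unit.mul_left_cancel
    rw [hsig2]
    have h1 : 1 ≤ n*(2*m) := Nat.one_le_iff_ne_zero.mpr (Nat.mul_ne_zero hn.ne' (by omega))
    have e2 : ((n*(2*m)*(n*(2*m)-1) : ℕ) : ℚ[X] ⧸ I) = 2*(M*N*(2*M*N-1)) := by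
      rw [Nat.cast_mul, Nat.cast_sub h1]
      push_cast; ring
    rw [e2]; push_cast; ring
  have S6h : (2:ℚ[X] ⧸ I) * π (sig n (n*(2*m-1))) =
      2*(2*M-1)*N + (2*M-1)*N*((2*M-1)*N-1)*u := by
    rw [hsig2]
    have h1 : 1 ≤ n*(2*m-1) := Nat.one_le_iff_ne_zero.mpr (Nat.mul_ne_zero hn.ne' (by omega))
    have e1 : ((n*(2*m-1) : ℕ) : ℚ[X] ⧸ I) = (2*M-1)*N := by
      rw [Nat.cast_mul, c1]; ring
    have e2 : ((n*(2*m-1)*(n*(2*m-1)-1) : ℕ) : ℚ[X] ⧸ I) = (2*M-1)*N*((2*M-1)*N-1) := by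
      rw [Nat.cast_mul, Nat.cast_sub h1, e1, Nat.cast_one]
    rw [e2, e1]; ring
  have S7' : π (sig n 1) = 1 := by
    have e : sig n 1 = 1 := by simp [sig]
    rw [e, map_one]
  have S8' : π (sig n 2) = 2 + 1*u := by
    apply h2unit.mul_left_cancel
    rw [hsig2]
    norm_num
    try ring
  -- the pair factors
  have hNApair : ∀ i ∈ Finset.range (n-1),
      π (fp ((2*m-1)*n + (i+1)) * fp ((2*m-2)*n + (i+1))) =
      (1 - π (X^(2*(i+1))))^2 +
        (-(4*M-3) * (π (X^(2*(i+1))) * (1 - π (X^(2*(i+1)))))) * u := by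
    intro i _
    rw [map_mul, hfp' (2*m-1) (i+1), hfp' (2*m-2) (i+1), c1, c2]
    linear_combination ((π (X^(2*(i+1))))^2 * (2*M-1) * (2*M-2)) * hu2
  have hDApair : ∀ i ∈ Finset.range (n-1),
      π (fp (i+1) * fp (n + (i+1))) =
      (1 - π (X^(2*(i+1))))^2 +
        (-1 * (π (X^(2*(i+1))) * (1 - π (X^(2*(i+1)))))) * u := by
    intro i _
    rw [map_mul, show fp (i+1) = fp (0*n + (i+1)) from by rw [zero_mul, zero_add],
      show fp (n + (i+1)) = fp (1*n + (i+1)) from by rw [one_mul],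
      hfp' 0 (i+1), hfp' 1 (i+1)]
    push_cast
    ring
  -- products
  have hA0' : π (A0p n) = ∏ i ∈ Finset.range (n-1), (1 - π (X^(2*(i+1))))^2 := by
    rw [A0p, map_prod]
    exact Finset.prod_congr rfl fun i _ => by rw [map_pow, fp, map_sub, map_one]
  have hW' : π (Wp n) = ∑ i ∈ Finset.range (n-1),
      (π (X^(2*(i+1))) * (1 - π (X^(2*(i+1))))) *
        ∏ t ∈ (Finset.range (n-1)).erase i, (1 - π (X^(2*(t+1))))^2 := by
    rw [Wp, map_sum]
    refine Finset.sum_congr rfl fun i _ => ?_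
    have hpr : π (∏ t ∈ (Finset.range (n-1)).erase i, (fp (t+1))^2) =
        ∏ t ∈ (Finset.range (n-1)).erase i, (1 - π (X^(2*(t+1))))^2 := by
      rw [map_prod]
      exact Finset.prod_congr rfl fun t _ => by rw [map_pow, fp, map_sub, map_one]
    rw [map_mul, map_mul, hpr, fp, map_sub, map_one]
    try ring
  have hPNA : π (∏ i ∈ Finset.range (n-1),
        (fp ((2*m-1)*n + (i+1)) * fp ((2*m-2)*n + (i+1)))) =
      π (A0p n) + (-(4*M-3) * π (Wp n)) * u := by
    rw [map_prod, Finset.prod_congr rfl hNApair,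
      prod_linear u hu2 _ (fun i => (1 - π (X^(2*(i+1))))^2)
        (fun i => -(4*M-3) * (π (X^(2*(i+1))) * (1 - π (X^(2*(i+1)))))),
      hA0', hW']
    congr 2
    rw [Finset.mul_sum]
    exact Finset.sum_congr rfl fun i _ => by ring
  have hPDA : π (∏ i ∈ Finset.range (n-1), (fp (i+1) * fp (n + (i+1)))) =
      π (A0p n) + (-1 * π (Wp n)) * u := by
    rw [map_prod, Finset.prod_congr rfl hDApair,
      prod_linear u hu2 _ (fun i => (1 - π (X^(2*(i+1))))^2)
        (fun i => -1 * (π (X^(2*(i+1))) * (1 - π (X^(2*(i+1)))))),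
      hA0', hW']
    congr 2
    rw [Finset.mul_sum]
    exact Finset.sum_congr rfl fun i _ => by ring
  -- hZ
  have hZ : u * ((N - 1) * π (A0p n) + 2 * π (Wp n)) = 0 := by
    have h := key_phi n hn
    have h0 : π ((X^(2*n) - 1) * (((n:ℚ[X]) - 1) * A0p n + 2 * Wp n)) = 0 :=
      hmemZ _ (by rw [pow_two]; exact mul_dvd_mul hdvd1 h)
    rw [hu]
    simp only [map_mul, map_add, map_sub, map_one, map_natCast, map_ofNat] at h0 ⊢
    try exact h0
  -- unfold the four polynomials
  have hNAp : π (NAp m n) = π (sig n (2*m)) * π (sig n (2*m-1)) *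
      (π (A0p n) + (-(4*M-3) * π (Wp n)) * u) := by
    rw [NAp, map_mul, map_mul, hPNA]
  have hDAp : π (DAp n) = π (sig n 1) * π (sig n 2) *
      (π (A0p n) + (-1 * π (Wp n)) * u) := by
    rw [DAp, map_mul, map_mul, hPDA]
  have hNBp : π (NBp m n) = π (sig n (n*(2*m))) * π (sig n (n*(2*m-1))) := by
    rw [NBp, map_mul]
  have hDBp : π (DBp n) = π (sig n (n*1)) * π (sig n (n*2)) := by
    rw [DBp, map_mul]
  -- final computation, scaled by 2
  apply h2unit.mul_left_cancel
  calc (2:ℚ[X] ⧸ I) * (π (NAp m n) * π (DBp n))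
      = ((π (sig n (2*m)))*(π (sig n (2*m-1))))*(((2:ℚ[X] ⧸ I) * π (sig n (n*1)))*(π (sig n (n*2))))*(π (A0p n) + (-(4*M-3) * π (Wp n))*u) := by
        rw [hNAp, hDBp]; ring
    _ = ((2*M + M*(2*M-1)*u)*((2*M-1) + (2*M-1)*(M-1)*u))*((2*N + N*(N-1)*u)*(2*N + N*(2*N-1)*u))*(π (A0p n) + (-(4*M-3) * π (Wp n))*u) := by
        rw [S1', S2', S3h, S4']
    _ = (2*M)*(2*M-1)*(2*N)*(2*N)*(π (A0p n)) +
        ((M*(2*M-1))*(2*M-1)*(2*N)*(2*N)*(π (A0p n)) +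
         (2*M)*((2*M-1)*(M-1))*(2*N)*(2*N)*(π (A0p n)) +
         (2*M)*(2*M-1)*(N*(N-1))*(2*N)*(π (A0p n)) +
         (2*M)*(2*M-1)*(2*N)*(N*(2*N-1))*(π (A0p n)) +
         (2*M)*(2*M-1)*(2*N)*(2*N)*(-(4*M-3) * π (Wp n)))*u :=
      foldL hu2 (2*M) (M*(2*M-1)) (2*M-1) ((2*M-1)*(M-1)) (2*N) (N*(N-1)) (2*N) (N*(2*N-1)) (π (A0p n)) (-(4*M-3) * π (Wp n))
    _ = (2*M*N)*(2*(2*M-1)*N)*1*2*(π (A0p n)) +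
        ((M*N*(2*M*N-1))*(2*(2*M-1)*N)*1*2*(π (A0p n)) +
         (2*M*N)*((2*M-1)*N*((2*M-1)*N-1))*1*2*(π (A0p n)) +
         (2*M*N)*(2*(2*M-1)*N)*0*2*(π (A0p n)) +
         (2*M*N)*(2*(2*M-1)*N)*1*1*(π (A0p n)) +
         (2*M*N)*(2*(2*M-1)*N)*1*2*(-1 * π (Wp n)))*u := by
        linear_combination (-16*M*(2*M-1)*(M-1)*N^2) * hZ
    _ = ((2*M*N + M*N*(2*M*N-1)*u)*((2*(2*M-1)*N) + (2*M-1)*N*((2*M-1)*N-1)*u))*((1 + 0*u)*(2 + 1*u))*(π (A0p n) + (-1 * π (Wp n))*u) :=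
      (foldL hu2 (2*M*N) (M*N*(2*M*N-1)) (2*(2*M-1)*N) ((2*M-1)*N*((2*M-1)*N-1)) 1 0 2 1 (π (A0p n)) (-1 * π (Wp n))).symm
    _ = (π (sig n (n*(2*m))))*((2:ℚ[X] ⧸ I) * π (sig n (n*(2*m-1))))*((π (sig n 1))*(π (sig n 2)))*(π (A0p n) + (-1 * π (Wp n))*u) := by
        rw [S5', S6h, S7', S8']
        ring
    _ = 2 * (π (NBp m n) * π (DAp n)) := by
        rw [hNBp, hDAp]; ring

lemma phi_not_dvd_D (n : ℕ) (hn : 0 < n) :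
    ¬ (Polynomial.cyclotomic (2*n) ℚ ∣ DAp n * DBp n) := by
  intro hdvd
  set Φ := Polynomial.cyclotomic (2*n) ℚ with hΦ
  have hirr : Irreducible Φ := Polynomial.cyclotomic.irreducible_rat (by omega)
  haveI : Fact (Irreducible Φ) := ⟨hirr⟩
  set K := AdjoinRoot Φ
  haveI : CharZero K := charZero_of_injective_algebraMap (algebraMap ℚ K).injective
  set x : K := AdjoinRoot.root Φ with hxdef
  have hroot : Polynomial.IsRoot (Polynomial.cyclotomic (2*n) K) x := by
    have h1 : Polynomial.cyclotomic (2*n) K = Polynomial.map (AdjoinRoot.of Φ) Φ :=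
      (Polynomial.map_cyclotomic (2*n) (AdjoinRoot.of Φ)).symm
    rw [h1]
    exact AdjoinRoot.isRoot_root Φ
  haveI : NeZero ((2*n : ℕ) : K) := ⟨Nat.cast_ne_zero.mpr (by omega)⟩
  have hx : IsPrimitiveRoot x (2*n) := (Polynomial.isRoot_cyclotomic_iff).mp hroot
  set π := AdjoinRoot.mk Φ with hπ
  have h0 : π (DAp n * DBp n) = 0 := AdjoinRoot.mk_eq_zero.mpr hdvd
  have hsigK : ∀ k : ℕ, π (sig n k) = (k : K) := by
    intro k
    rw [sig, map_sum]
    have : ∀ i ∈ Finset.range k, π (X^(2*n*i)) = 1 := by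
      intro i _
      rw [map_pow, AdjoinRoot.mk_X, show 2*n*i = 2*n*i from rfl, pow_mul, hx.pow_eq_one,
        one_pow]
    rw [Finset.sum_congr rfl this, Finset.sum_const, Finset.card_range, nsmul_eq_mul, mul_one]
  have hfpK : ∀ c : ℕ, ¬ (2*n ∣ 2*c) → π (fp c) ≠ 0 := by
    intro c hc h
    rw [fp, map_sub, map_one, map_pow, AdjoinRoot.mk_X] at h
    have : x^(2*c) = 1 := by linear_combination -h
    exact hc ((hx.pow_eq_one_iff_dvd (2*c)).mp this)
  have hnd1 : ∀ j : ℕ, 1 ≤ j → j ≤ 2*n-1 → j ≠ n → ¬ (2*n ∣ 2*j) := by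
    intro j h1 h2 h3 hdv
    rcases hdv with ⟨k, hk⟩
    match k with
    | 0 => omega
    | 1 => omega
    | (k+2) =>
      have h4 : 2*n*2 ≤ 2*n*(k+2) := Nat.mul_le_mul_left _ (by omega)
      omega
  have hDA : π (DAp n) ≠ 0 := by
    rw [DAp, map_mul, map_mul, hsigK, hsigK, map_prod]
    refine mul_ne_zero (mul_ne_zero ?_ ?_) ?_
    · exact Nat.cast_ne_zero.mpr one_ne_zero
    · exact Nat.cast_ne_zero.mpr two_ne_zero
    · rw [Finset.prod_ne_zero_iff]
      intro i hi
      simp only [Finset.mem_range] at hi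
      rw [map_mul]
      exact mul_ne_zero (hfpK _ (hnd1 (i+1) (by omega) (by omega) (by omega)))
        (hfpK _ (hnd1 (n+(i+1)) (by omega) (by omega) (by omega)))
  have hDB : π (DBp n) ≠ 0 := by
    rw [DBp, map_mul, hsigK, hsigK]
    exact mul_ne_zero (Nat.cast_ne_zero.mpr (by omega)) (Nat.cast_ne_zero.mpr (by omega))
  rw [map_mul] at h0
  exact (mul_ne_zero hDA hDB) h0

/-- for positive integers `m`, `n`,
`[2mn choose 2n]_{q²} ≡ [2m choose 2]_{q^{2n²}}  (mod Φ_{2n}(q)²)`. -/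
theorem qbinom_sq_two_congr (m n : ℕ) (hm : 0 < m) (hn : 0 < n) :
    pcong (qbinom (RatFunc.X ^ 2) (2 * (m : ℤ) * n) (2 * (n : ℤ)))
      (qbinom (RatFunc.X ^ (2 * n ^ 2)) (2 * (m : ℤ)) 2)
      (Polynomial.cyclotomic (2 * n) ℚ ^ 2) := by
  obtain ⟨pA, hpA⟩ := qbinom_exists_poly 2 (by norm_num) (2*m*n) (2*n)
  obtain ⟨pB, hpB⟩ := qbinom_exists_poly (2*n^2) (by positivity) (2*m) 2
  have hc1 : (2*(m:ℤ)*n) = ((2*m*n : ℕ) : ℤ) := by push_cast; ring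
  have hc2 : (2*(n:ℤ)) = ((2*n : ℕ) : ℤ) := by push_cast; ring
  have hc3 : (2*(m:ℤ)) = ((2*m : ℕ) : ℤ) := by push_cast; ring
  have hc4 : (2:ℤ) = ((2:ℕ):ℤ) := by norm_num
  have hA : qbinom (RatFunc.X ^ 2) (2*(m:ℤ)*n) (2*(n:ℤ)) =
      algebraMap (Polynomial ℚ) (RatFunc ℚ) pA := by rw [hc1, hc2]; exact hpA
  have hB : qbinom (RatFunc.X ^ (2*n^2)) (2*(m:ℤ)) 2 =
      algebraMap (Polynomial ℚ) (RatFunc ℚ) pB := by rw [hc3, hc4]; exact hpB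
  have hAeq : pA * DAp n = NAp m n := by
    apply RatFunc.algebraMap_injective ℚ
    rw [map_mul, ← hA]
    exact qbinom_A_eq m n hm hn
  have hBeq : pB * DBp n = NBp m n := by
    apply RatFunc.algebraMap_injective ℚ
    rw [map_mul, ← hB]
    exact qbinom_B_eq m n hm hn
  have hdvd : (Polynomial.cyclotomic (2*n) ℚ)^2 ∣ (pA - pB) * (DAp n * DBp n) := by
    have he : (pA - pB) * (DAp n * DBp n) =
        NAp m n * DBp n - NBp m n * DAp n := by
      rw [← hAeq, ← hBeq]; ring
    rw [he]
    exact KD m n hm hn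
  have hirr : Irreducible (Polynomial.cyclotomic (2*n) ℚ) :=
    Polynomial.cyclotomic.irreducible_rat (by omega)
  have hcop : IsCoprime ((Polynomial.cyclotomic (2*n) ℚ)^2) (DAp n * DBp n) :=
    IsCoprime.pow_left ((hirr.coprime_iff_not_dvd).mpr (phi_not_dvd_D n hn))
  have hfinal : (Polynomial.cyclotomic (2*n) ℚ)^2 ∣ pA - pB :=
    hcop.dvd_of_dvd_mul_right hdvd
  obtain ⟨C, hC⟩ := hfinal
  exact ⟨C, by rw [hA, hB, ← map_mul, ← hC, map_sub]⟩
end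

section
/- Let m and n be positive integers and let k satisfy 1 ≤ k ≤ n−1. Then [2n(m−1)+2k choose k]_q ≡ (−1)^k q^{k(3k−1)/2} (1+q^k) [n−k choose k]_q (mod Φₙ(q)). -/
open Polynomial Finset

lemma one_sub_X_pow_ne_zero {j : ℕ} (hj : 0 < j) : (1 - Polynomial.X ^ j : ℚ[X]) ≠ 0 := by
  intro h
  have := congrArg (fun p : ℚ[X] => p.coeff 0) h
  simp [Polynomial.coeff_X_pow, hj.ne] at this

lemma den_ne_zero (k : ℕ) : (∏ i ∈ range k, (1 - Polynomial.X ^ (i + 1)) : ℚ[X]) ≠ 0 :=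
  Finset.prod_ne_zero_iff.2 fun i _ => one_sub_X_pow_ne_zero (Nat.succ_pos i)

lemma qbinom_natCast (N k : ℕ) (h : k ≤ N) :
    qbinom RatFunc.X (N : ℤ) (k : ℤ) =
      algebraMap ℚ[X] (RatFunc ℚ) (∏ i ∈ range k, (1 - Polynomial.X ^ (N - i))) /
        algebraMap ℚ[X] (RatFunc ℚ) (∏ i ∈ range k, (1 - Polynomial.X ^ (i + 1))) := by
  rw [qbinom, if_pos ⟨Int.natCast_nonneg k, by exact_mod_cast h⟩]
  rw [Int.toNat_natCast]
  congr 1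
  · rw [map_prod]
    refine Finset.prod_congr rfl fun i hi => ?_
    rw [map_sub, map_one, map_pow, RatFunc.algebraMap_X]
    congr 1
    have hiN : i ≤ N := le_trans (Nat.le_of_lt_succ (by simpa using Nat.lt_succ_of_lt (mem_range.mp hi))) (le_trans h (le_refl N))
    rw [show ((N : ℤ) - (i : ℤ)) = ((N - i : ℕ) : ℤ) by omega, zpow_natCast]
  · rw [map_prod]
    refine Finset.prod_congr rfl fun i hi => ?_
    rw [map_sub, map_one, map_pow, RatFunc.algebraMap_X]
    norm_cast

lemma qbinom_pascal_s10 (N k : ℕ) (hk : 0 < k) (hkN : k ≤ N) :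
    qbinom RatFunc.X ((N + 1 : ℕ) : ℤ) (k : ℤ) =
      qbinom RatFunc.X (N : ℤ) (k : ℤ) +
        RatFunc.X ^ (N + 1 - k) * qbinom RatFunc.X (N : ℤ) ((k - 1 : ℕ) : ℤ) := by
  obtain ⟨k', rfl⟩ : ∃ k', k = k' + 1 := ⟨k - 1, by omega⟩
  rw [qbinom_natCast (N + 1) (k' + 1) (by omega), qbinom_natCast N (k' + 1) hkN,
    qbinom_natCast N ((k' + 1) - 1) (by omega)]
  simp only [Nat.add_sub_cancel]
  have hA : (∏ i ∈ range (k' + 1), (1 - Polynomial.X ^ (N + 1 - i)) : ℚ[X]) =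
      (∏ i ∈ range k', (1 - Polynomial.X ^ (N - i))) * (1 - Polynomial.X ^ (N + 1)) := by
    rw [Finset.prod_range_succ']
    congr 1
    refine Finset.prod_congr rfl fun i hi => ?_
    congr 2
    omega
  have hB : (∏ i ∈ range (k' + 1), (1 - Polynomial.X ^ (N - i)) : ℚ[X]) =
      (∏ i ∈ range k', (1 - Polynomial.X ^ (N - i))) * (1 - Polynomial.X ^ (N + 1 - (k' + 1))) := by
    rw [Finset.prod_range_succ]
    congr 3
    omega
  have hD : (∏ i ∈ range (k' + 1), (1 - Polynomial.X ^ (i + 1)) : ℚ[X]) =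
      (∏ i ∈ range k', (1 - Polynomial.X ^ (i + 1))) * (1 - Polynomial.X ^ (k' + 1)) :=
    Finset.prod_range_succ _ _
  rw [hA, hB, hD]
  simp only [map_mul, map_sub, map_one, map_pow, RatFunc.algebraMap_X]
  set a := algebraMap ℚ[X] (RatFunc ℚ) (∏ i ∈ range k', (1 - Polynomial.X ^ (N - i))) with ha
  set d := algebraMap ℚ[X] (RatFunc ℚ) (∏ i ∈ range k', (1 - Polynomial.X ^ (i + 1))) with hd
  have hd0 : d ≠ 0 := RatFunc.algebraMap_ne_zero (den_ne_zero k')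
  have h20 : (1 : RatFunc ℚ) - RatFunc.X ^ (k' + 1) ≠ 0 := by
    have := RatFunc.algebraMap_ne_zero (one_sub_X_pow_ne_zero (Nat.succ_pos k'))
    simpa [map_sub, map_one, map_pow, RatFunc.algebraMap_X] using this
  rw [show (RatFunc.X : RatFunc ℚ) ^ (N + 1) =
      RatFunc.X ^ (N + 1 - (k' + 1)) * RatFunc.X ^ (k' + 1) by rw [← pow_add]; congr 1; omega]
  field_simp
  ring

lemma qbinom_diag (N : ℕ) : qbinom RatFunc.X (N : ℤ) (N : ℤ) = 1 := by
  rw [qbinom_natCast N N le_rfl]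
  have : (∏ i ∈ range N, (1 - Polynomial.X ^ (N - i)) : ℚ[X]) =
      ∏ i ∈ range N, (1 - Polynomial.X ^ (i + 1)) := by
    rw [← Finset.prod_range_reflect (fun i => (1 - Polynomial.X ^ (i + 1) : ℚ[X])) N]
    refine Finset.prod_congr rfl fun i hi => ?_
    have hi' := Finset.mem_range.mp hi
    congr 2
    omega
  rw [this, div_self (RatFunc.algebraMap_ne_zero (den_ne_zero N))]

lemma qbinom_zero_s10 (N : ℕ) : qbinom RatFunc.X (N : ℤ) ((0 : ℕ) : ℤ) = 1 := by
  rw [qbinom_natCast N 0 (Nat.zero_le N)]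
  simp

lemma qbinom_mem (N : ℕ) : ∀ k : ℕ, k ≤ N →
    ∃ p : ℚ[X], qbinom RatFunc.X (N : ℤ) (k : ℤ) = algebraMap ℚ[X] (RatFunc ℚ) p := by
  induction N with
  | zero =>
    intro k hk
    interval_cases k
    exact ⟨1, by simpa using qbinom_zero_s10 0⟩
  | succ N ih =>
    intro k hk
    rcases Nat.eq_zero_or_pos k with rfl | hk0
    · exact ⟨1, by simpa using qbinom_zero_s10 (N + 1)⟩
    rcases eq_or_lt_of_le hk with rfl | hlt
    · exact ⟨1, by simpa using qbinom_diag (N + 1)⟩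
    have hkN : k ≤ N := by omega
    obtain ⟨p, hp⟩ := ih k hkN
    obtain ⟨p', hp'⟩ := ih (k - 1) (by omega)
    refine ⟨p + Polynomial.X ^ (N + 1 - k) * p', ?_⟩
    rw [qbinom_pascal_s10 N k hk0 hkN, hp, hp', map_add, map_mul, map_pow, RatFunc.algebraMap_X]

lemma cyclotomic_prime_rat {n : ℕ} (hn : 0 < n) : Prime (cyclotomic n ℚ) :=
  UniqueFactorizationMonoid.irreducible_iff_prime.mp (cyclotomic.irreducible_rat hn)

lemma cyclotomic_dvd_X_pow_sub_one_imp {n j : ℕ} (hn : 0 < n) (hj : 0 < j)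
    (h : cyclotomic n ℚ ∣ Polynomial.X ^ j - 1) : n ∣ j := by
  rw [← prod_cyclotomic_eq_X_pow_sub_one hj ℚ] at h
  obtain ⟨d, hd, hdvd⟩ := (cyclotomic_prime_rat hn).exists_mem_finset_dvd h
  have hdpos : 0 < d := Nat.pos_of_mem_divisors hd
  have : n = d := by
    apply cyclotomic_injective (R := ℚ)
    exact eq_of_monic_of_associated (cyclotomic.monic n ℚ) (cyclotomic.monic d ℚ)
      ((cyclotomic.irreducible_rat hn).associated_of_dvd (cyclotomic.irreducible_rat hdpos) hdvd)
  exact this ▸ Nat.dvd_of_mem_divisors hd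

lemma cyclotomic_not_dvd_den {n k : ℕ} (hn : 0 < n) (hk : k ≤ n - 1) :
    ¬ cyclotomic n ℚ ∣ ∏ i ∈ range k, (1 - Polynomial.X ^ (i + 1) : ℚ[X]) := by
  intro h
  obtain ⟨i, hi, hdvd⟩ := (cyclotomic_prime_rat hn).exists_mem_finset_dvd h
  have hi' := Finset.mem_range.mp hi
  have : cyclotomic n ℚ ∣ Polynomial.X ^ (i + 1) - 1 := by have := dvd_neg.mpr hdvd; rwa [neg_sub] at this
  have := cyclotomic_dvd_X_pow_sub_one_imp hn (Nat.succ_pos i) this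
  have := Nat.le_of_dvd (Nat.succ_pos i) this
  omega

lemma quot_X_pow_n (n : ℕ) :
    (Ideal.Quotient.mk (Ideal.span {cyclotomic n ℚ}) Polynomial.X) ^ n = 1 := by
  have h : Ideal.Quotient.mk (Ideal.span {cyclotomic n ℚ}) (Polynomial.X ^ n - 1) = 0 := by
    rw [Ideal.Quotient.eq_zero_iff_mem, Ideal.mem_span_singleton]
    exact cyclotomic.dvd_X_pow_sub_one n ℚ
  rw [map_sub, map_pow, map_one, sub_eq_zero] at h
  exact h

lemma quot_num1 (m n k : ℕ) :
    (Ideal.Quotient.mk (Ideal.span {cyclotomic n ℚ}))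
        (∏ i ∈ range k, (1 - Polynomial.X ^ (2 * n * (m - 1) + 2 * k - i) : ℚ[X])) =
      ∏ i ∈ range k,
        (1 - (Ideal.Quotient.mk (Ideal.span {cyclotomic n ℚ}) Polynomial.X) ^ (k + 1 + i)) := by
  set x := Ideal.Quotient.mk (Ideal.span {cyclotomic n ℚ}) Polynomial.X with hx
  have hxn := quot_X_pow_n n
  rw [map_prod]
  have h1 : ∀ i ∈ range k,
      (Ideal.Quotient.mk (Ideal.span {cyclotomic n ℚ}))
        ((1 - Polynomial.X ^ (2 * n * (m - 1) + 2 * k - i) : ℚ[X])) = 1 - x ^ (2 * k - i) := by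
    intro i hi
    have hi' := Finset.mem_range.mp hi
    have he : 2 * n * (m - 1) + 2 * k - i = n * (2 * (m - 1)) + (2 * k - i) := by
      rw [Nat.add_sub_assoc (by omega : i ≤ 2 * k)]
      congr 1
      ring
    rw [map_sub, map_one, map_pow, ← hx, he, pow_add, pow_mul, hxn, one_pow, one_mul]
  rw [Finset.prod_congr rfl h1, ← Finset.prod_range_reflect (fun i => 1 - x ^ (k + 1 + i)) k]
  refine Finset.prod_congr rfl fun i hi => ?_
  have hi' := Finset.mem_range.mp hi
  congr 2
  omega

lemma sum_shift (k : ℕ) (hk : 1 ≤ k) : (∑ i ∈ range k, (k + i)) = k * (3 * k - 1) / 2 := by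
  have h1 : (∑ i ∈ range k, (k + i)) * 2 = k * (3 * k - 1) := by
    rw [Finset.sum_add_distrib, Finset.sum_const, Finset.card_range, smul_eq_mul, add_mul,
      Finset.sum_range_id_mul_two]
    obtain ⟨k', rfl⟩ : ∃ k', k = k' + 1 := ⟨k - 1, by omega⟩
    simp only [Nat.add_sub_cancel, show 3 * (k' + 1) - 1 = 3 * k' + 2 by omega]
    ring
  omega

lemma prod_shift_helper {R : Type*} [CommRing R] (x : R) (k : ℕ) (hk : 1 ≤ k) :
    ∏ i ∈ range k, (1 - x ^ (k + 1 + i)) = (1 + x ^ k) * ∏ i ∈ range k, (1 - x ^ (k + i)) := by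
  obtain ⟨k', rfl⟩ : ∃ k', k = k' + 1 := ⟨k - 1, by omega⟩
  rw [Finset.prod_range_succ, Finset.prod_range_succ']
  have h1 : ∀ i ∈ range k', (1 - x ^ (k' + 1 + 1 + i)) = (1 - x ^ (k' + 1 + (i + 1))) := by
    intro i _
    congr 2
    omega
  rw [Finset.prod_congr rfl h1, show k' + 1 + 1 + k' = (k' + 1) + (k' + 1) by omega, pow_add]
  ring

lemma key_dvd0 (m n k : ℕ) (hn : 0 < n) (hk1 : 1 ≤ k) (hk2 : k ≤ n - 1) (h2k : n ≤ 2 * k) :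
    cyclotomic n ℚ ∣ (∏ i ∈ range k, (1 - Polynomial.X ^ (2 * n * (m - 1) + 2 * k - i)) : ℚ[X]) := by
  rw [← Ideal.mem_span_singleton, ← Ideal.Quotient.eq_zero_iff_mem, quot_num1]
  refine Finset.prod_eq_zero (Finset.mem_range.mpr (show n - k - 1 < k by omega)) ?_
  rw [show k + 1 + (n - k - 1) = n by omega, quot_X_pow_n, sub_self]

lemma key_dvd_s10 (m n k : ℕ) (hn : 0 < n) (hk1 : 1 ≤ k) (h2k : 2 * k ≤ n) :
    cyclotomic n ℚ ∣
      ((∏ i ∈ range k, (1 - Polynomial.X ^ (2 * n * (m - 1) + 2 * k - i))) -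
        (-1) ^ k * Polynomial.X ^ (k * (3 * k - 1) / 2) * (1 + Polynomial.X ^ k) *
          ∏ i ∈ range k, (1 - Polynomial.X ^ (n - k - i)) : ℚ[X]) := by
  rw [← Ideal.mem_span_singleton, ← Ideal.Quotient.eq_zero_iff_mem, map_sub, sub_eq_zero,
    quot_num1]
  set x := Ideal.Quotient.mk (Ideal.span {cyclotomic n ℚ}) Polynomial.X with hx
  have hxn := quot_X_pow_n n
  simp only [map_mul, map_pow, map_neg, map_one, map_add, map_prod, map_sub, ← hx]
  have hEprod : x ^ (k * (3 * k - 1) / 2) * ∏ i ∈ range k, (1 - x ^ (n - k - i)) =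
      (-1) ^ k * ∏ i ∈ range k, (1 - x ^ (k + i)) := by
    rw [← sum_shift k hk1, ← Finset.prod_pow_eq_pow_sum, ← Finset.prod_mul_distrib]
    have h1 : ∀ i ∈ range k, x ^ (k + i) * (1 - x ^ (n - k - i)) = (-1) * (1 - x ^ (k + i)) := by
      intro i hi
      have hi' := Finset.mem_range.mp hi
      rw [mul_sub, mul_one, ← pow_add, show k + i + (n - k - i) = n by omega, hxn]
      ring
    rw [Finset.prod_congr rfl h1, Finset.prod_mul_distrib, Finset.prod_const, Finset.card_range]
  rw [show ((-1 : ℚ[X] ⧸ Ideal.span {cyclotomic n ℚ}) ^ k * x ^ (k * (3 * k - 1) / 2) *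
        (1 + x ^ k) * ∏ i ∈ range k, (1 - x ^ (n - k - i))) =
      (-1) ^ k * (1 + x ^ k) * (x ^ (k * (3 * k - 1) / 2) * ∏ i ∈ range k, (1 - x ^ (n - k - i)))
      from by ring, hEprod, prod_shift_helper x k hk1]
  have h4 : ((-1 : ℚ[X] ⧸ Ideal.span {cyclotomic n ℚ})) ^ k * (-1) ^ k = 1 := by
    rw [← mul_pow]; norm_num
  linear_combination (-((1 + x ^ k) * ∏ i ∈ range k, (1 - x ^ (k + i)))) * h4

/-- for positive integers `m`, `n` and `1 ≤ k ≤ n−1`,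
`[2n(m−1)+2k choose k]_q ≡ (−1)^k q^{k(3k−1)/2} (1+q^k) [n−k choose k]_q  (mod Φₙ(q))`. -/
theorem qbinom_tauraso_congr (m n k : ℕ) (hm : 0 < m) (hn : 0 < n)
    (hk1 : 1 ≤ k) (hk2 : k ≤ n - 1) :
    pcong (qbinom RatFunc.X (2 * (n : ℤ) * ((m : ℤ) - 1) + 2 * (k : ℤ)) (k : ℤ))
      ((-1) ^ k * RatFunc.X ^ (k * (3 * k - 1) / 2) * (1 + RatFunc.X ^ k) *
        qbinom RatFunc.X ((n : ℤ) - (k : ℤ)) (k : ℤ))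
      (Polynomial.cyclotomic n ℚ) := by
  have hkn : k < n := by omega
  have hkM : k ≤ 2 * n * (m - 1) + 2 * k := le_trans (by omega) (Nat.le_add_left (2 * k) _)
  have hM : (2 * (n : ℤ) * ((m : ℤ) - 1) + 2 * (k : ℤ)) = ((2 * n * (m - 1) + 2 * k : ℕ) : ℤ) := by
    push_cast [Nat.cast_sub hm]
    ring
  have hnk : ((n : ℤ) - (k : ℤ)) = ((n - k : ℕ) : ℤ) := by omega
  rw [hM, hnk]
  obtain ⟨p, hp⟩ := qbinom_mem (2 * n * (m - 1) + 2 * k) k hkM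
  have hA2 := qbinom_natCast (2 * n * (m - 1) + 2 * k) k hkM
  have hden0 : algebraMap ℚ[X] (RatFunc ℚ) (∏ i ∈ range k, (1 - Polynomial.X ^ (i + 1))) ≠ 0 :=
    RatFunc.algebraMap_ne_zero (den_ne_zero k)
  have hprime := cyclotomic_prime_rat hn
  have hnotden := cyclotomic_not_dvd_den hn hk2
  have hpden : p * (∏ i ∈ range k, (1 - Polynomial.X ^ (i + 1))) =
      ∏ i ∈ range k, (1 - Polynomial.X ^ (2 * n * (m - 1) + 2 * k - i)) := by
    apply RatFunc.algebraMap_injective ℚ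
    rw [map_mul, ← hp, hA2, div_mul_cancel₀ _ hden0]
  by_cases hcase : 2 * k ≤ n
  · obtain ⟨p₂, hp₂⟩ := qbinom_mem (n - k) k (by omega)
    have hB2 := qbinom_natCast (n - k) k (by omega)
    set b₂ : ℚ[X] := (-1) ^ k * Polynomial.X ^ (k * (3 * k - 1) / 2) * (1 + Polynomial.X ^ k) * p₂
      with hb₂
    have hBpoly : ((-1) ^ k * RatFunc.X ^ (k * (3 * k - 1) / 2) * (1 + RatFunc.X ^ k) *
        qbinom RatFunc.X ((n - k : ℕ) : ℤ) (k : ℤ)) = algebraMap ℚ[X] (RatFunc ℚ) b₂ := by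
      rw [hp₂, hb₂]
      simp [map_mul, map_pow, map_add, map_neg, map_one, RatFunc.algebraMap_X]
    have hb₂den : b₂ * (∏ i ∈ range k, (1 - Polynomial.X ^ (i + 1))) =
        (-1) ^ k * Polynomial.X ^ (k * (3 * k - 1) / 2) * (1 + Polynomial.X ^ k) *
          ∏ i ∈ range k, (1 - Polynomial.X ^ (n - k - i)) := by
      apply RatFunc.algebraMap_injective ℚ
      rw [map_mul, ← hBpoly, hB2]
      simp only [map_mul, map_pow, map_neg, map_one, map_add, RatFunc.algebraMap_X]
      rw [mul_assoc, div_mul_cancel₀ _ hden0]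
    have hdvd : cyclotomic n ℚ ∣ (p - b₂) := by
      have h5 : (p - b₂) * (∏ i ∈ range k, (1 - Polynomial.X ^ (i + 1))) =
          (∏ i ∈ range k, (1 - Polynomial.X ^ (2 * n * (m - 1) + 2 * k - i))) -
            (-1) ^ k * Polynomial.X ^ (k * (3 * k - 1) / 2) * (1 + Polynomial.X ^ k) *
              ∏ i ∈ range k, (1 - Polynomial.X ^ (n - k - i)) := by
        rw [sub_mul, hpden, hb₂den]
      have hkey := key_dvd_s10 m n k hn hk1 hcase
      rw [← h5] at hkey
      exact (hprime.dvd_mul.mp hkey).resolve_right hnotden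
    obtain ⟨c, hc⟩ := hdvd
    exact ⟨c, by rw [hp, hBpoly, ← map_sub, hc, map_mul]⟩
  · have hz : qbinom RatFunc.X ((n - k : ℕ) : ℤ) (k : ℤ) = 0 := by
      rw [qbinom, if_neg]
      rintro ⟨-, h⟩
      omega
    rw [hz, mul_zero]
    have hdvd : cyclotomic n ℚ ∣ p := by
      have hkey := key_dvd0 m n k hn hk1 hk2 (by omega)
      rw [← hpden] at hkey
      exact (hprime.dvd_mul.mp hkey).resolve_right hnotden
    obtain ⟨c, hc⟩ := hdvd
    exact ⟨c, by rw [sub_zero, hp, hc, map_mul]⟩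
end

section
/- For every positive integer n, 𝒜ₙ(q) ≡ 1 (mod Φₙ(q)), i.e. 𝒜ₙ(q) − 1 is divisible by Φₙ(q) as a rational function (its value at every primitive n-th root of unity is 1). -/
open Polynomial Finset

lemma dvd_of_primroots (n : ℕ) (hn : 0 < n) (p : Polynomial ℚ)
    (h : ∀ ζ : ℂ, IsPrimitiveRoot ζ n → Polynomial.aeval ζ p = 0) :
    Polynomial.cyclotomic n ℚ ∣ p := by
  have hmap : Polynomial.cyclotomic n ℂ ∣ p.map (algebraMap ℚ ℂ) := by
    have hζ0 := Complex.isPrimitiveRoot_exp n hn.ne'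
    rw [Polynomial.cyclotomic_eq_prod_X_sub_primitiveRoots hζ0]
    refine Finset.prod_dvd_of_coprime ?_ ?_
    · intro x hx y hy hxy
      exact Polynomial.isCoprime_X_sub_C_of_isUnit_sub (sub_ne_zero.mpr hxy).isUnit
    · intro μ hμ
      rw [Polynomial.dvd_iff_isRoot]
      have := h μ ((mem_primitiveRoots hn).mp hμ)
      simpa [Polynomial.aeval_def, Polynomial.eval_map, Polynomial.IsRoot] using this
  rw [← Polynomial.map_cyclotomic n (algebraMap ℚ ℂ)] at hmap
  exact (Polynomial.map_dvd_map _ (algebraMap ℚ ℂ).injective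
    (Polynomial.cyclotomic.monic n ℚ)).mp hmap

lemma rcong_of_dvd (A : RatFunc ℚ) (P p : Polynomial ℚ)
    (hA : A = algebraMap (Polynomial ℚ) (RatFunc ℚ) p) (h : P ∣ p - 1) :
    rcong A 1 P := by
  obtain ⟨c, hc⟩ := h
  refine ⟨algebraMap _ _ c, ?_, ?_⟩
  · rw [hA, ← map_mul, ← hc, map_sub, map_one]
  · rw [RatFunc.denom_algebraMap]
    exact isCoprime_one_left

lemma primroot_half {n : ℕ} (hn : 0 < n) {ζ : ℂ} (hζ : IsPrimitiveRoot ζ n)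
    {s : ℕ} (hs : n = 2 * s) : ζ ^ s = -1 := by
  have h1 : (ζ ^ s) ^ 2 = 1 := by
    rw [← pow_mul, show s * 2 = n by omega, hζ.pow_eq_one]
  have hne : ζ ^ s ≠ 1 := hζ.pow_ne_one_of_pos_of_lt (by omega) (by omega)
  have hfac : (ζ ^ s - 1) * (ζ ^ s + 1) = 0 := by linear_combination h1
  rcases mul_eq_zero.mp hfac with h | h
  · exact absurd (sub_eq_zero.mp h) hne
  · linear_combination h

/-- for every positive integer `n`, `𝒜ₙ(q) ≡ 1  (mod Φₙ(q))`. -/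
theorem qA_congr_one (n : ℕ) (hn : 0 < n) :
    rcong (qA n) 1 (Polynomial.cyclotomic n ℚ) := by
  rcases (show n % 3 = 0 ∨ n % 3 = 1 ∨ n % 3 = 2 by omega) with h3 | h3 | h3
  · -- n % 3 = 0
    have hA : qA n = algebraMap (Polynomial ℚ) (RatFunc ℚ)
        ((-1)^(n/3) * (1 + X ^ (n/3)) * X ^ (n/3 * (3*(n/3) - 1) / 2)) := by
      have hm : (n:ℤ)/3 = ((n/3 : ℕ) : ℤ) := by omega
      have hee : ((n/3 : ℕ) : ℤ) * (3*((n/3 : ℕ):ℤ) - 1)/2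
          = ((n/3 * (3*(n/3) - 1) / 2 : ℕ) : ℤ) := by
        push_cast [Nat.cast_sub (show 1 ≤ 3*(n/3) by omega)]
        ring
      rw [qA]
      simp only [if_pos h3]
      rw [hm, hee, zpow_natCast, zpow_natCast]
      simp [map_mul, map_add, map_pow, map_neg, map_one, RatFunc.algebraMap_X]
    refine rcong_of_dvd _ _ _ hA (dvd_of_primroots n hn _ ?_)
    intro ζ hζ
    have hzn : ζ ^ n = 1 := hζ.pow_eq_one
    simp only [map_sub, map_mul, map_add, map_pow, map_neg, map_one, Polynomial.aeval_X,
      sub_eq_zero]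
    have hx1 : ζ ^ (n/3) ≠ 1 := hζ.pow_ne_one_of_pos_of_lt (by omega) (by omega)
    have hx3 : (ζ ^ (n/3)) ^ 3 = 1 := by rw [← pow_mul, show n/3*3 = n by omega, hzn]
    have hsum : 1 + ζ ^ (n/3) = -((ζ ^ (n/3)) ^ 2) := by
      have hfac : (ζ ^ (n/3) - 1) * ((ζ ^ (n/3)) ^ 2 + ζ ^ (n/3) + 1) = 0 := by
        linear_combination hx3
      rcases mul_eq_zero.mp hfac with h | h
      · exact absurd (sub_eq_zero.mp h) hx1
      · linear_combination h
    rw [hsum, show (-1:ℂ)^(n/3) * -((ζ^(n/3))^2) * ζ^(n/3 * (3*(n/3) - 1) / 2)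
      = (-1)^(n/3+1) * ζ^(n/3*2 + n/3 * (3*(n/3) - 1) / 2) by
        rw [pow_add ζ, pow_mul ζ, pow_succ]; ring]
    rcases Nat.even_or_odd (n/3) with hpar | hpar
    · obtain ⟨u, hu, hnn⟩ : ∃ u, n/3 = 2*u+2 ∧ n = 6*u+6 := by
        obtain ⟨t, ht⟩ := hpar; exact ⟨t - 1, by omega, by omega⟩
      have hs : ζ ^ (3*u+3) = -1 := primroot_half hn hζ (by omega)
      have h1 : n/3 * (3*(n/3) - 1) = 2*((u+1)*(6*u+5)) := by
        rw [show 3*(n/3) - 1 = 6*u+5 by omega, hu]; ring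
      have hE : n/3*2 + n/3 * (3*(n/3) - 1) / 2 = (u+1)*n + (3*u+3) := by
        rw [h1, Nat.mul_div_cancel_left _ (by norm_num), hu, hnn]; ring
      rw [hE, pow_add ζ, mul_comm (u+1) n, pow_mul ζ, hzn, one_pow, one_mul, hs,
        Odd.neg_one_pow ⟨u+1, by omega⟩]
      norm_num
    · obtain ⟨t, ht⟩ := hpar
      have h1 : n/3 * (3*(n/3) - 1) = 2*((2*t+1)*(3*t+1)) := by
        rw [show 3*(n/3) - 1 = 6*t+2 by omega, ht]; ring
      have hE : n/3*2 + n/3 * (3*(n/3) - 1) / 2 = (t+1)*n := by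
        rw [h1, Nat.mul_div_cancel_left _ (by norm_num), ht, show n = 6*t+3 by omega]; ring
      rw [hE, mul_comm (t+1) n, pow_mul, hzn, one_pow, mul_one,
        Even.neg_one_pow ⟨t+1, by omega⟩]
  · -- n % 3 = 1
    have hA : qA n = algebraMap (Polynomial ℚ) (RatFunc ℚ)
        ((-1)^(n/3) * X ^ (n/3 * (3*(n/3)+1) / 2)) := by
      have hm : (n:ℤ)/3 = ((n/3 : ℕ) : ℤ) := by omega
      have hee : ((n/3 : ℕ) : ℤ) * (3*((n/3 : ℕ):ℤ)+1)/2
          = ((n/3 * (3*(n/3)+1) / 2 : ℕ) : ℤ) := by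
        push_cast; ring
      rw [qA]
      simp only [if_neg (show ¬ n % 3 = 0 by omega), if_pos h3]
      rw [hm, hee, zpow_natCast, map_mul, map_pow, map_pow, map_neg, map_one,
        RatFunc.algebraMap_X]
    refine rcong_of_dvd _ _ _ hA (dvd_of_primroots n hn _ ?_)
    intro ζ hζ
    have hzn : ζ ^ n = 1 := hζ.pow_eq_one
    simp only [map_sub, map_mul, map_pow, map_neg, map_one, Polynomial.aeval_X, sub_eq_zero]
    rcases Nat.even_or_odd (n/3) with hpar | hpar
    · obtain ⟨t, ht⟩ := hpar
      have hE : n/3 * (3*(n/3)+1) / 2 = t * n := by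
        rw [show n/3 = 2*t by omega, show 3*(2*t)+1 = n by omega,
          show 2*t*n = 2*(t*n) by ring, Nat.mul_div_cancel_left _ (by norm_num)]
      rw [hE, mul_comm t n, pow_mul, hzn, one_pow, mul_one,
        Even.neg_one_pow ⟨t, by omega⟩]
    · obtain ⟨t, ht⟩ := hpar
      have hs : ζ ^ (n/2) = -1 := primroot_half hn hζ (by omega)
      have hE : n/3 * (3*(n/3)+1) / 2 = n/3 * (n/2) := by
        rw [Nat.mul_div_assoc _ (show 2 ∣ 3*(n/3)+1 by omega),
          show (3*(n/3)+1)/2 = n/2 by omega]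
      rw [hE, mul_comm (n/3) (n/2), pow_mul, hs, ← mul_pow]
      norm_num
  · -- n % 3 = 2
    have hA : qA n = algebraMap (Polynomial ℚ) (RatFunc ℚ)
        ((-1)^(n/3+1) * X ^ ((n/3+1) * (3*(n/3)+2) / 2)) := by
      have hm : (n:ℤ)/3 = ((n/3 : ℕ) : ℤ) := by omega
      have hee : (((n/3 : ℕ) : ℤ) + 1) * (3*((n/3 : ℕ):ℤ)+2)/2
          = (((n/3+1) * (3*(n/3)+2) / 2 : ℕ) : ℤ) := by
        push_cast; ring
      rw [qA]
      simp only [if_neg (show ¬ n % 3 = 0 by omega), if_neg (show ¬ n % 3 = 1 by omega)]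
      rw [hm, hee, zpow_natCast, map_mul, map_pow, map_pow, map_neg, map_one,
        RatFunc.algebraMap_X]
    refine rcong_of_dvd _ _ _ hA (dvd_of_primroots n hn _ ?_)
    intro ζ hζ
    have hzn : ζ ^ n = 1 := hζ.pow_eq_one
    simp only [map_sub, map_mul, map_pow, map_neg, map_one, Polynomial.aeval_X, sub_eq_zero]
    rcases Nat.even_or_odd (n/3) with hpar | hpar
    · obtain ⟨t, ht⟩ := hpar
      have hs : ζ ^ (n/2) = -1 := primroot_half hn hζ (by omega)
      have hE : (n/3+1) * (3*(n/3)+2) / 2 = (n/3+1) * (n/2) := by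
        rw [Nat.mul_div_assoc _ (show 2 ∣ 3*(n/3)+2 by omega),
          show (3*(n/3)+2)/2 = n/2 by omega]
      rw [hE, mul_comm (n/3+1) (n/2), pow_mul, hs, ← mul_pow]
      norm_num
    · obtain ⟨t, ht⟩ := hpar
      have hE : (n/3+1) * (3*(n/3)+2) / 2 = (t+1) * n := by
        rw [show n/3+1 = 2*(t+1) by omega, show 3*(n/3)+2 = n by omega,
          show 2*(t+1)*n = 2*((t+1)*n) by ring, Nat.mul_div_cancel_left _ (by norm_num)]
      rw [hE, mul_comm (t+1) n, pow_mul, hzn, one_pow, mul_one,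
        Even.neg_one_pow ⟨t+1, by omega⟩]
end

section
/- For every positive integer n, ℬₙ(q) ≡ 1 (mod Φₙ(q)), i.e. ℬₙ(q) − 1 is divisible by Φₙ(q) as a rational function (its value at every primitive n-th root of unity is 1). -/
open Polynomial Finset

lemma pow_half_eq_neg_one {ζ : ℂ} {n k : ℕ} (hζ : IsPrimitiveRoot ζ n) (hk : n = 2 * k)
    (h0 : 0 < k) : ζ ^ k = -1 := by
  have h2 : ζ ^ k * ζ ^ k = 1 := by
    rw [← pow_add, show k + k = n by omega, hζ.pow_eq_one]
  rcases mul_self_eq_one_iff.mp h2 with h | h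
  · exact absurd h (hζ.pow_ne_one_of_pos_of_lt h0.ne' (by omega))
  · exact h

lemma cube_sum {ω : ℂ} (hω : IsPrimitiveRoot ω 3) : 1 + ω + ω ^ 2 = 0 := by
  have h3 : ω ^ 3 = 1 := hω.pow_eq_one
  have hne : ω ≠ 1 := by
    have := hω.pow_ne_one_of_pos_of_lt (l := 1) one_ne_zero (by norm_num)
    simpa using this
  apply mul_left_cancel₀ (sub_ne_zero.mpr hne)
  rw [mul_zero]
  linear_combination h3

lemma comp1 (m : ℕ) (ζ : ℂ) (hζ : IsPrimitiveRoot ζ (3 * m + 1)) :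
    (-1 : ℂ) ^ m * ζ ^ (m * (3 * m + 1) / 2) = 1 := by
  rcases Nat.even_or_odd m with ⟨j, hj⟩ | ⟨j, hj⟩
  · have h2 : m * (3 * m + 1) = 2 * (j * (3 * m + 1)) := by rw [hj]; ring
    have he : m * (3 * m + 1) / 2 = j * (3 * m + 1) := by
      rw [h2]; exact Nat.mul_div_cancel_left _ (by norm_num)
    rw [he, mul_comm j (3 * m + 1), pow_mul, hζ.pow_eq_one, one_pow,
      Even.neg_one_pow ⟨j, hj⟩, one_mul]
  · have h2 : m * (3 * m + 1) = 2 * (m * (3 * j + 2)) := by rw [hj]; ring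
    have he : m * (3 * m + 1) / 2 = m * (3 * j + 2) := by
      rw [h2]; exact Nat.mul_div_cancel_left _ (by norm_num)
    have hhalf : ζ ^ (3 * j + 2) = -1 :=
      pow_half_eq_neg_one hζ (by omega) (by omega)
    rw [he, mul_comm m (3 * j + 2), pow_mul, hhalf, Odd.neg_one_pow ⟨j, hj⟩]
    norm_num

lemma comp2 (m : ℕ) (hm : 0 < m) (ζ : ℂ) (hζ : IsPrimitiveRoot ζ (3 * m + 2)) :
    (-1 : ℂ) ^ (m + 1) * ζ ^ ((m - 1) * (3 * m + 2) / 2) = 1 := by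
  rcases Nat.even_or_odd m with ⟨j, hj⟩ | ⟨j, hj⟩
  · -- m even, m = 2j with j ≥ 1
    have h2 : (m - 1) * (3 * m + 2) = 2 * ((m - 1) * (3 * j + 1)) := by
      rw [show 3 * m + 2 = 2 * (3 * j + 1) by omega]; ring
    have he : (m - 1) * (3 * m + 2) / 2 = (m - 1) * (3 * j + 1) := by
      rw [h2]; exact Nat.mul_div_cancel_left _ (by norm_num)
    have hhalf : ζ ^ (3 * j + 1) = -1 :=
      pow_half_eq_neg_one hζ (by omega) (by omega)
    rw [he, mul_comm (m - 1) (3 * j + 1), pow_mul, hhalf,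
      Odd.neg_one_pow (⟨j - 1, by omega⟩ : Odd (m - 1)),
      Odd.neg_one_pow (⟨j, by omega⟩ : Odd (m + 1))]
    norm_num
  · -- m odd, m = 2j+1
    have h2 : (m - 1) * (3 * m + 2) = 2 * (j * (3 * m + 2)) := by
      rw [show m - 1 = 2 * j by omega]; ring
    have he : (m - 1) * (3 * m + 2) / 2 = j * (3 * m + 2) := by
      rw [h2]; exact Nat.mul_div_cancel_left _ (by norm_num)
    rw [he, mul_comm j (3 * m + 2), pow_mul, hζ.pow_eq_one, one_pow,
      Even.neg_one_pow (⟨j + 1, by omega⟩ : Even (m + 1)), one_mul]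

lemma comp0 (m : ℕ) (hm : 2 ≤ m) (ζ : ℂ) (hζ : IsPrimitiveRoot ζ (3 * m)) :
    (-1 : ℂ) ^ m * (1 + ζ ^ (2 * m)) * ζ ^ (m * (3 * m - 5) / 2) = 1 := by
  have hω : IsPrimitiveRoot (ζ ^ m) 3 := hζ.pow (by omega) (by ring)
  have hcs := cube_sum hω
  have hsum : 1 + ζ ^ (2 * m) = -ζ ^ m := by
    have h2m : ζ ^ (2 * m) = (ζ ^ m) ^ 2 := by rw [← pow_mul]; ring_nf
    rw [h2m]; linear_combination hcs
  rw [hsum]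
  have hstep : ∀ e : ℕ, (-1 : ℂ) ^ m * -ζ ^ m * ζ ^ e = -((-1) ^ m * ζ ^ (m + e)) := by
    intro e; rw [pow_add]; ring
  rw [hstep]
  rcases Nat.even_or_odd m with ⟨j, hj⟩ | ⟨k', hk'⟩
  · -- m even, m = 2k+2
    obtain ⟨k, hk⟩ : ∃ k, m = 2 * k + 2 := ⟨j - 1, by omega⟩
    have h2 : m * (3 * m - 5) = 2 * ((k + 1) * (6 * k + 1)) := by
      rw [show 3 * m - 5 = 6 * k + 1 by omega, hk]; ring
    have hdiv : m * (3 * m - 5) / 2 = (k + 1) * (6 * k + 1) := by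
      rw [h2]; exact Nat.mul_div_cancel_left _ (by norm_num)
    have he : m + (k + 1) * (6 * k + 1) = 3 * (k + 1) * (2 * k + 1) := by
      rw [hk]; ring
    have hhalf : ζ ^ (3 * (k + 1)) = -1 :=
      pow_half_eq_neg_one hζ (by omega) (by omega)
    rw [hdiv, he, pow_mul, hhalf, Odd.neg_one_pow (⟨k, by omega⟩ : Odd (2 * k + 1)),
      Even.neg_one_pow (⟨j, hj⟩ : Even m)]
    norm_num
  · -- m odd, m = 2k+3
    obtain ⟨k, hk⟩ : ∃ k, m = 2 * k + 3 := ⟨k' - 1, by omega⟩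
    have h2 : m * (3 * m - 5) = 2 * (m * (3 * k + 2)) := by
      rw [show 3 * m - 5 = 2 * (3 * k + 2) by omega]; ring
    have hdiv : m * (3 * m - 5) / 2 = m * (3 * k + 2) := by
      rw [h2]; exact Nat.mul_div_cancel_left _ (by norm_num)
    have he : m + m * (3 * k + 2) = 3 * m * (k + 1) := by ring
    rw [hdiv, he, pow_mul, hζ.pow_eq_one, one_pow,
      Odd.neg_one_pow (⟨k', hk'⟩ : Odd m)]
    norm_num

lemma rcong_aux (n : ℕ) (hn : 0 < n) (f : Polynomial ℚ) (t : ℕ) (A : RatFunc ℚ)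
    (hA : A * algebraMap (Polynomial ℚ) (RatFunc ℚ) (X ^ t) = algebraMap _ _ f)
    (h : ∀ ζ : ℂ, IsPrimitiveRoot ζ n → Polynomial.aeval ζ f = ζ ^ t) :
    rcong A 1 (cyclotomic n ℚ) := by
  obtain ⟨ζ, hζ⟩ : ∃ ζ : ℂ, IsPrimitiveRoot ζ n := ⟨_, Complex.isPrimitiveRoot_exp n hn.ne'⟩
  have hdvd : cyclotomic n ℚ ∣ f - X ^ t := by
    rw [cyclotomic_eq_minpoly_rat hζ hn]
    apply minpoly.dvd
    simp [h ζ hζ]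
  obtain ⟨g, hg⟩ := hdvd
  have hXt : algebraMap (Polynomial ℚ) (RatFunc ℚ) (X ^ t) ≠ 0 :=
    RatFunc.algebraMap_ne_zero (pow_ne_zero _ X_ne_zero)
  refine ⟨algebraMap (Polynomial ℚ) (RatFunc ℚ) g /
      algebraMap (Polynomial ℚ) (RatFunc ℚ) (X ^ t), ?_, ?_⟩
  · rw [← mul_div_assoc, eq_div_iff hXt, sub_mul, hA, one_mul, ← map_sub, hg, map_mul]
  · have hd := RatFunc.denom_div_dvd g (X ^ t)
    have hX : IsCoprime (X ^ t : Polynomial ℚ) (cyclotomic n ℚ) := by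
      apply IsCoprime.pow_left
      rw [(Polynomial.irreducible_X (R := ℚ)).coprime_iff_not_dvd, Polynomial.X_dvd_iff]
      rcases eq_or_lt_of_le (show 1 ≤ n from hn) with h1 | h1
      · rw [← h1]; simp [cyclotomic_one]
      · rw [cyclotomic_coeff_zero ℚ h1]; norm_num
    exact hX.of_isCoprime_of_dvd_left hd

/-- for every positive integer `n`, `ℬₙ(q) ≡ 1  (mod Φₙ(q))`. -/
theorem qB_congr_one (n : ℕ) (hn : 0 < n) :
    rcong (qB n) 1 (Polynomial.cyclotomic n ℚ) := by
  set M := n / 3 with hM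
  have hm : (n : ℤ) / 3 = (M : ℤ) := by omega
  rcases (show n % 3 = 0 ∨ n % 3 = 1 ∨ n % 3 = 2 by omega) with h3 | h3 | h3
  · -- n % 3 = 0, so n = 3M with M ≥ 1
    have hn3 : n = 3 * M := by omega
    rcases (show M = 1 ∨ 2 ≤ M by omega) with hM1 | hM2
    · -- n = 3
      have hn' : n = 3 := by omega
      subst hn'
      have hqB : qB 3 = (-1) * (1 + RatFunc.X ^ (2 : ℤ)) * RatFunc.X ^ (-1 : ℤ) := by
        simp only [qB]
        norm_num
      rw [hqB]
      apply rcong_aux 3 (by norm_num) (-((1 + X ^ 2) : Polynomial ℚ)) 1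
      · rw [pow_one, RatFunc.algebraMap_X, map_neg, map_add, map_one, map_pow,
          RatFunc.algebraMap_X, zpow_neg_one,
          show ((2 : ℤ)) = ((2 : ℕ) : ℤ) from rfl, zpow_natCast,
          mul_assoc, inv_mul_cancel₀ RatFunc.X_ne_zero, mul_one, neg_one_mul]
      · intro ζ hζ
        simp only [map_neg, map_add, map_one, map_pow, aeval_X, pow_one]
        linear_combination -(cube_sum hζ)
    · -- M ≥ 2
      set a := M * (3 * M - 5) / 2 with ha
      have hexp : (n : ℤ) / 3 * (3 * ((n : ℤ) / 3) - 5) / 2 = (a : ℤ) := by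
        rw [hm]
        have h1 : ((M * (3 * M - 5) : ℕ) : ℤ) = (M : ℤ) * (3 * (M : ℤ) - 5) := by
          push_cast [Nat.cast_sub (show 5 ≤ 3 * M by omega)]; ring
        rw [← h1]; omega
      have hexp2 : 2 * ((n : ℤ) / 3) = ((2 * M : ℕ) : ℤ) := by rw [hm]; push_cast; ring
      have hqB : qB n = (-1) ^ M * (1 + RatFunc.X ^ ((2 * M : ℕ) : ℤ)) *
          RatFunc.X ^ (a : ℤ) := by
        simp only [qB, h3, reduceIte]
        rw [hexp, hexp2, ← hM]
      rw [hqB, zpow_natCast, zpow_natCast]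
      apply rcong_aux n hn ((-1) ^ M * (1 + X ^ (2 * M)) * X ^ a) 0
      · simp [map_mul, map_pow, map_neg, map_one, map_add, RatFunc.algebraMap_X]
      · intro ζ hζ
        simp only [map_mul, map_pow, map_neg, map_one, map_add, aeval_X, pow_zero]
        exact comp0 M hM2 ζ (by rw [← hn3]; exact hζ)
  · -- n % 3 = 1
    have hn3 : n = 3 * M + 1 := by omega
    set a := M * (3 * M + 1) / 2 with ha
    have hexp : (n : ℤ) / 3 * (3 * ((n : ℤ) / 3) + 1) / 2 = (a : ℤ) := by
      rw [hm]
      have h1 : (M : ℤ) * (3 * (M : ℤ) + 1) = ((M * (3 * M + 1) : ℕ) : ℤ) := by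
        push_cast; ring
      rw [h1]; omega
    have hqB : qB n = (-1) ^ M * RatFunc.X ^ (a : ℤ) := by
      simp only [qB, h3]
      norm_num [hexp, hM]
    rw [hqB, zpow_natCast]
    apply rcong_aux n hn ((-1) ^ M * X ^ a) 0
    · simp [map_mul, map_pow, map_neg, map_one, RatFunc.algebraMap_X]
    · intro ζ hζ
      simp only [map_mul, map_pow, map_neg, map_one, aeval_X, pow_zero]
      exact comp1 M ζ (by rw [← hn3]; exact hζ)
  · -- n % 3 = 2
    have hn3 : n = 3 * M + 2 := by omega
    rcases Nat.eq_zero_or_pos M with hM0 | hM1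
    · -- n = 2
      have hn' : n = 2 := by omega
      subst hn'
      have hqB : qB 2 = -RatFunc.X ^ (-1 : ℤ) := by
        simp only [qB]
        norm_num
      rw [hqB]
      apply rcong_aux 2 (by norm_num) (-1 : Polynomial ℚ) 1
      · rw [pow_one, RatFunc.algebraMap_X, map_neg, map_one, zpow_neg_one, neg_mul,
          inv_mul_cancel₀ RatFunc.X_ne_zero]
      · intro ζ hζ
        simp only [map_neg, map_one, pow_one]
        have h1 : ζ = -1 := by simpa using pow_half_eq_neg_one hζ rfl one_pos
        rw [h1]
    · -- M ≥ 1
      set a := (M - 1) * (3 * M + 2) / 2 with ha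
      have hexp : ((n : ℤ) / 3 - 1) * (3 * ((n : ℤ) / 3) + 2) / 2 = (a : ℤ) := by
        rw [hm]
        have h1 : (((M - 1) * (3 * M + 2) : ℕ) : ℤ) = ((M : ℤ) - 1) * (3 * (M : ℤ) + 2) := by
          push_cast [Nat.cast_sub (show 1 ≤ M by omega)]; ring
        rw [← h1]; omega
      have hqB : qB n = (-1) ^ (M + 1) * RatFunc.X ^ (a : ℤ) := by
        simp only [qB, h3]
        norm_num [hexp, hM]
      rw [hqB, zpow_natCast]
      apply rcong_aux n hn ((-1) ^ (M + 1) * X ^ a) 0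
      · simp [map_mul, map_pow, map_neg, map_one, RatFunc.algebraMap_X]
      · intro ζ hζ
        simp only [map_mul, map_pow, map_neg, map_one, aeval_X, pow_zero]
        exact comp2 M hM1 ζ (by rw [← hn3]; exact hζ)
end
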